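/- arXiv:2208.01304 — 15 statements merged into one kernel-verified Lean document; each statement's English description precedes it below -/
import Mathlib

section
/- Let G be a group acting via α on a metric space (X,d), and let 𝒰_d denote the uniformity on X induced by d. Then the following are equivalent: (i) the uniformity 𝒰_d is G-invariant, i.e. for every U ∈ 𝒰_d there exists U' ∈ 𝒰_d such that for all t ∈ G and all (x,y) ∈ U' one has (α(t,x), α(t,y)) ∈ U; (ii) the metric d is pseudo G-invariant, i.e. for every ε > 0 there exists δ > 0 such that for all x,y ∈ X with d(x,y) < δ and all t ∈ G one has d(α(t,x), α(t,y)) < ε; (iii) there exists a G-invariant metric d' on X (meaning d'(α(t,x), α(t,y)) = d'(x,y) for all x,y ∈ X and t ∈ G) such that 𝒰_d = 𝒰_{d'}. -/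
private lemma min_add_one {a b : ℝ} (ha : 0 ≤ a) (hb : 0 ≤ b) :
    min (a + b) 1 ≤ min a 1 + min b 1 := by
  rcases le_total 1 a with h | h
  · calc min (a + b) 1 ≤ 1 := min_le_right _ _
    _ = min a 1 + 0 := by rw [min_eq_right h]; ring
    _ ≤ min a 1 + min b 1 := by gcongr; exact le_min hb zero_le_one
  rcases le_total 1 b with h' | h'
  · calc min (a + b) 1 ≤ 1 := min_le_right _ _
    _ = 0 + min b 1 := by rw [min_eq_right h']; ring
    _ ≤ min a 1 + min b 1 := by gcongr; exact le_min ha zero_le_one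
  · calc min (a + b) 1 ≤ a + b := min_le_left _ _
    _ = min a 1 + min b 1 := by rw [min_eq_left h, min_eq_left h']

/-- For a group `G` acting via `α` on a metric space `(X, d)` (with induced
uniformity `𝒰_d = 𝓤 X`), the following are equivalent:
(i) the uniformity is `G`-invariant;
(ii) the metric is pseudo `G`-invariant;
(iii) there is a `G`-invariant metric `d'` inducing the same uniformity. -/
theorem stmt0 {G X : Type*} [Group G] [MetricSpace X]
    (α : G → X → X)
    (hone : ∀ x, α 1 x = x)
    (hmul : ∀ s t x, α s (α t x) = α (s * t) x) :
    List.TFAE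
      [ -- (i) the uniformity `𝒰_d` is `G`-invariant
        ∀ U ∈ uniformity X, ∃ U' ∈ uniformity X, ∀ t : G, ∀ p : X × X, p ∈ U' →
          (α t p.1, α t p.2) ∈ U,
        -- (ii) the metric `d` is pseudo `G`-invariant
        ∀ ε > (0 : ℝ), ∃ δ > (0 : ℝ), ∀ x y : X, dist x y < δ → ∀ t : G,
          dist (α t x) (α t y) < ε,
        -- (iii) there is a `G`-invariant metric `d'` with `𝒰_d = 𝒰_{d'}`
        ∃ d' : X → X → ℝ,
          (∀ x y, 0 ≤ d' x y) ∧
          (∀ x y, d' x y = 0 ↔ x = y) ∧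
          (∀ x y, d' x y = d' y x) ∧
          (∀ x y z, d' x z ≤ d' x y + d' y z) ∧
          (∀ (t : G) (x y : X), d' (α t x) (α t y) = d' x y) ∧
          (∀ V : Set (X × X), V ∈ uniformity X ↔
            ∃ r > (0 : ℝ), {p : X × X | d' p.1 p.2 < r} ⊆ V) ] := by
  tfae_have 1 → 2
  | h1 => by
    intro ε hε
    obtain ⟨U', hU', hprop⟩ := h1 {p : X × X | dist p.1 p.2 < ε}
      (Metric.dist_mem_uniformity hε)
    obtain ⟨δ, hδ, hball⟩ := Metric.mem_uniformity_dist.mp hU'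
    exact ⟨δ, hδ, fun x y hxy t => hprop t (x, y) (hball hxy)⟩
  tfae_have 2 → 3
  | h2 => by
    set f : X → X → G → ℝ := fun x y t => min (dist (α t x) (α t y)) 1 with hf
    have hfnn : ∀ x y t, 0 ≤ f x y t := fun x y t =>
      le_min dist_nonneg zero_le_one
    have hbdd : ∀ x y, BddAbove (Set.range (f x y)) := fun x y =>
      ⟨1, by rintro _ ⟨t, rfl⟩; exact min_le_right _ _⟩
    set d' : X → X → ℝ := fun x y => ⨆ t : G, f x y t with hd'
    have hle : ∀ x y t, f x y t ≤ d' x y := fun x y t => le_ciSup (hbdd x y) t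
    have hsup_le : ∀ x y (c : ℝ), (∀ t, f x y t ≤ c) → d' x y ≤ c := fun x y c h =>
      ciSup_le h
    have hnn : ∀ x y, 0 ≤ d' x y := fun x y => le_trans (hfnn x y 1) (hle x y 1)
    have hone' : ∀ x y, f x y 1 = min (dist x y) 1 := by
      intro x y; simp [hf, hone]
    refine ⟨d', hnn, ?_, ?_, ?_, ?_, ?_⟩
    · -- d' x y = 0 ↔ x = y
      intro x y
      constructor
      · intro h0
        have : min (dist x y) 1 ≤ 0 := by rw [← hone' x y, ← h0]; exact hle x y 1
        have hd0 : dist x y ≤ 0 := by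
          by_contra hc
          push_neg at hc
          exact absurd (lt_min hc one_pos) (not_lt.mpr this)
        exact dist_le_zero.mp hd0
      · rintro rfl
        have : ∀ t, f x x t = 0 := by intro t; simp [hf]
        apply le_antisymm (hsup_le x x 0 (fun t => le_of_eq (this t))) (hnn x x)
    · intro x y
      simp only [hd', hf, dist_comm]
    · -- triangle
      intro x y z
      apply hsup_le
      intro t
      calc f x z t ≤ min (dist (α t x) (α t y) + dist (α t y) (α t z)) 1 :=
            min_le_min (dist_triangle _ _ _) le_rfl
        _ ≤ f x y t + f y z t := min_add_one dist_nonneg dist_nonneg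
        _ ≤ d' x y + d' y z := add_le_add (hle x y t) (hle y z t)
    · -- invariance
      intro s x y
      have hrange : Set.range (f (α s x) (α s y)) = Set.range (f x y) := by
        ext r
        constructor
        · rintro ⟨t, rfl⟩
          exact ⟨t * s, by simp [hf, hmul]⟩
        · rintro ⟨t, rfl⟩
          refine ⟨t * s⁻¹, ?_⟩
          simp [hf, hmul, mul_assoc]
      simp only [hd', iSup]
      rw [hrange]
    · -- uniformity
      intro V
      constructor
      · intro hV
        obtain ⟨ε, hε, hball⟩ := Metric.mem_uniformity_dist.mp hV
        refine ⟨min ε 1, lt_min hε one_pos, ?_⟩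
        rintro ⟨x, y⟩ hxy
        simp only [Set.mem_setOf_eq] at hxy
        have h1 : min (dist x y) 1 < min ε 1 := lt_of_le_of_lt
          (by rw [← hone' x y]; exact hle x y 1) hxy
        have hdxy : dist x y < ε := by
          rcases le_total (dist x y) 1 with h | h
          · rw [min_eq_left h] at h1
            exact lt_of_lt_of_le h1 (min_le_left _ _)
          · rw [min_eq_right h] at h1
            exact absurd (min_le_right ε 1) (not_le.mpr h1)
        exact hball hdxy
      · rintro ⟨r, hr, hsub⟩
        obtain ⟨δ, hδ, hδprop⟩ := h2 (min r 1 / 2) (by positivity)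
        refine Filter.mem_of_superset (Metric.dist_mem_uniformity hδ) ?_
        rintro ⟨x, y⟩ hxy
        simp only [Set.mem_setOf_eq] at hxy
        apply hsub
        simp only [Set.mem_setOf_eq]
        have : d' x y ≤ min r 1 / 2 := hsup_le x y _ (fun t =>
          le_trans (min_le_left _ _) (le_of_lt (hδprop x y hxy t)))
        calc d' x y ≤ min r 1 / 2 := this
          _ ≤ r / 2 := by gcongr; exact min_le_left _ _
          _ < r := by linarith
  tfae_have 3 → 1
  | ⟨d', hnn, heq, hsymm, htri, hinv, huni⟩ => by
    intro U hU
    obtain ⟨r, hr, hsub⟩ := (huni U).mp hU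
    refine ⟨{p : X × X | d' p.1 p.2 < r}, (huni _).mpr ⟨r, hr, subset_rfl⟩, ?_⟩
    intro t p hp
    apply hsub
    simp only [Set.mem_setOf_eq] at hp ⊢
    rw [hinv]
    exact hp
  tfae_finish
end

section
/- Let (X, 𝒰) be a Hausdorff uniform space and let α: G × X → X be a continuous action of a locally compact abelian group G. Then the following assertions are equivalent: (i) for every U ∈ 𝒰 there exist an open set O ⊆ G containing 0 and V ∈ 𝒰 such that {(α(s,x), α(t,y)) : s,t ∈ O, (x,y) ∈ V} ⊆ U; (ii) for every U ∈ 𝒰 there exist an open set O ⊆ G containing 0 and V ∈ 𝒰 such that {(α(s,x), y) : s ∈ O, (x,y) ∈ V} ⊆ U; (iii) for every U ∈ 𝒰 there exists an open set O ⊆ G containing 0 such that (α(s,x), x) ∈ U for all s ∈ O and all x ∈ X; (iv) the family of maps α_x: G → X, α_x(t) = α(t,x), indexed by x ∈ X, is equicontinuous at t = 0, i.e. for every U ∈ 𝒰 there exists an open set O ⊆ G containing 0 with (α_x(s), α_x(0)) ∈ U for all s ∈ O and all x ∈ X; (v) the family {α_x}_{x ∈ X} is uniformly equicontinuous, i.e.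 for every U ∈ 𝒰 there exists an open set O ⊆ G containing 0 with (α_x(s), α_x(t)) ∈ U for all x ∈ X and all s,t ∈ G with s − t ∈ O. -/
open Uniformity SetRel

/-! Every condition reduces to (iii), uniform closeness of `α s` to the identity for small `s`.
Because `α` is an action, `(α s x, α t x) = (α (s - t) y, y)` with `y = α t x`, which turns (iii)
into (v); and (iii) for a symmetric `W` with `W ○ W ○ W ⊆ U` gives (i) with `V = W`. -/

theorem SetRel.prodMk_mem_comp_comp_of_forall_mem {X : Type*} {W : SetRel X X} [W.IsSymm]
    {f g : X → X} (hf : ∀ x, (f x, x) ∈ W) (hg : ∀ x, (g x, x) ∈ W) {p : X × X} (hp : p ∈ W) :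
    (f p.1, g p.2) ∈ W ○ W ○ W :=
  prodMk_mem_comp (prodMk_mem_comp (hf p.1) hp) (W.symm (hg p.2))

theorem forall_mem_prodMk_mem_iff_forall_sub_mem {G X : Type*} [AddGroup G] (α : G → X → X)
    (hzero : ∀ x, α 0 x = x) (hadd : ∀ s t x, α s (α t x) = α (s + t) x)
    (O : Set G) (U : SetRel X X) :
    (∀ s ∈ O, ∀ x, (α s x, x) ∈ U) ↔ ∀ x s t, s - t ∈ O → (α s x, α t x) ∈ U := by
  constructor
  · intro h x s t hst
    simpa only [hadd, sub_add_cancel] using h (s - t) hst (α t x)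
  · intro h s hs x
    simpa only [hzero] using h x s 0 (by rwa [sub_zero])

theorem stmt1_general {G X : Type*}
    [AddCommGroup G] [TopologicalSpace G]
    [UniformSpace X]
    (α : G → X → X)
    (hzero : ∀ x, α 0 x = x)
    (hadd : ∀ s t x, α s (α t x) = α (s + t) x) :
    List.TFAE
      [ -- (i)
        ∀ U ∈ 𝓤 X, ∃ O : Set G, IsOpen O ∧ (0 : G) ∈ O ∧ ∃ V ∈ 𝓤 X,
          ∀ s ∈ O, ∀ t ∈ O, ∀ p : X × X, p ∈ V → (α s p.1, α t p.2) ∈ U,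
        -- (ii)
        ∀ U ∈ 𝓤 X, ∃ O : Set G, IsOpen O ∧ (0 : G) ∈ O ∧ ∃ V ∈ 𝓤 X,
          ∀ s ∈ O, ∀ p : X × X, p ∈ V → (α s p.1, p.2) ∈ U,
        -- (iii)
        ∀ U ∈ 𝓤 X, ∃ O : Set G, IsOpen O ∧ (0 : G) ∈ O ∧
          ∀ s ∈ O, ∀ x : X, (α s x, x) ∈ U,
        -- (iv) equicontinuity of the family `αₓ` at `t = 0`
        ∀ U ∈ 𝓤 X, ∃ O : Set G, IsOpen O ∧ (0 : G) ∈ O ∧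
          ∀ s ∈ O, ∀ x : X, (α s x, α 0 x) ∈ U,
        -- (v) uniform equicontinuity of the family `αₓ`
        ∀ U ∈ 𝓤 X, ∃ O : Set G, IsOpen O ∧ (0 : G) ∈ O ∧
          ∀ (x : X) (s t : G), s - t ∈ O → (α s x, α t x) ∈ U ] := by
  tfae_have 1 → 2 := fun h U hU => by
    obtain ⟨O, hO, h0, V, hV, hOV⟩ := h U hU
    exact ⟨O, hO, h0, V, hV, fun s hs p hp => by simpa only [hzero] using hOV s hs 0 h0 p hp⟩
  tfae_have 2 → 3 := fun h U hU => by
    obtain ⟨O, hO, h0, V, hV, hOV⟩ := h U hU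
    exact ⟨O, hO, h0, fun s hs x => hOV s hs (x, x) (refl_mem_uniformity hV)⟩
  tfae_have 3 ↔ 4 := by simp only [hzero]
  tfae_have 3 ↔ 5 := by
    simp only [forall_mem_prodMk_mem_iff_forall_sub_mem α hzero hadd]
  tfae_have 3 → 1 := fun h U hU => by
    obtain ⟨W, hW, hWsymm, hWU⟩ := comp_comp_symm_mem_uniformity_sets hU
    obtain ⟨O, hO, h0, hOW⟩ := h W hW
    exact ⟨O, hO, h0, W, hW, fun s hs t ht p hp =>
      hWU (SetRel.prodMk_mem_comp_comp_of_forall_mem (hOW s hs) (hOW t ht) hp)⟩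
  tfae_finish

/-- For a continuous action `α` of a locally compact abelian group `G` on a
Hausdorff uniform space `(X, 𝒰)`, the five equicontinuity-type conditions are equivalent. -/
theorem stmt1 {G X : Type*}
    [AddCommGroup G] [TopologicalSpace G] [IsTopologicalAddGroup G]
    [LocallyCompactSpace G] [T2Space G]
    [UniformSpace X] [T2Space X]
    (α : G → X → X)
    (hzero : ∀ x, α 0 x = x)
    (hadd : ∀ s t x, α s (α t x) = α (s + t) x)
    (hcont : Continuous fun p : G × X => α p.1 p.2) :
    List.TFAE
      [ -- (i)
        ∀ U ∈ 𝓤 X, ∃ O : Set G, IsOpen O ∧ (0 : G) ∈ O ∧ ∃ V ∈ 𝓤 X,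
          ∀ s ∈ O, ∀ t ∈ O, ∀ p : X × X, p ∈ V → (α s p.1, α t p.2) ∈ U,
        -- (ii)
        ∀ U ∈ 𝓤 X, ∃ O : Set G, IsOpen O ∧ (0 : G) ∈ O ∧ ∃ V ∈ 𝓤 X,
          ∀ s ∈ O, ∀ p : X × X, p ∈ V → (α s p.1, p.2) ∈ U,
        -- (iii)
        ∀ U ∈ 𝓤 X, ∃ O : Set G, IsOpen O ∧ (0 : G) ∈ O ∧
          ∀ s ∈ O, ∀ x : X, (α s x, x) ∈ U,
        -- (iv) equicontinuity of the family `αₓ` at `t = 0`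
        ∀ U ∈ 𝓤 X, ∃ O : Set G, IsOpen O ∧ (0 : G) ∈ O ∧
          ∀ s ∈ O, ∀ x : X, (α s x, α 0 x) ∈ U,
        -- (v) uniform equicontinuity of the family `αₓ`
        ∀ U ∈ 𝓤 X, ∃ O : Set G, IsOpen O ∧ (0 : G) ∈ O ∧
          ∀ (x : X) (s t : G), s - t ∈ O → (α s x, α t x) ∈ U ] :=
  stmt1_general α hzero hadd
end

section
/- Let α be a continuous action of a locally compact abelian group G on a Hausdorff uniform space (X, 𝒰), and assume the uniformity 𝒰 is G-invariant. Then for each x ∈ X the action α is equicontinuous on the orbit closure H_x = closure of {α(t,x) : t ∈ G}: for every entourage U ∈ 𝒰 there exist an open set O ⊆ G containing 0 and an entourage V ∈ 𝒰 such that for all t ∈ O and all y, z ∈ H_x with (y,z) ∈ V one has (α(t,y), z) ∈ U; in particular, (α(t,y), y) ∈ U for all t ∈ O and all y ∈ H_x. -/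
/-!
Commutativity makes the displacement of an orbit point `α s x` under `α t` the `α s`-image of the
displacement of `x`, so by invariance of the uniformity every orbit point is moved by `α t` as
little as `x` is; by approximation the same holds, up to composing a few entourages, on the orbit
closure. Continuity of `t ↦ α t x` at `0` makes the displacement of `x` small for `t` near `0`.
-/

open scoped Uniformity Topology SetRel

section

variable {G X : Type*} [AddCommGroup G] {α : G → X → X} {V W : SetRel X X}

theorem orbit_displacement_mem (hadd : ∀ s t x, α s (α t x) = α (s + t) x)
    (hVW : ∀ t, Set.MapsTo (Prod.map (α t) (α t)) V W) {x : X} {t : G}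
    (htx : (α t x, x) ∈ V) (s : G) : (α t (α s x), α s x) ∈ W := by
  rw [hadd, add_comm, ← hadd]
  exact hVW s htx

theorem orbitClosure_displacement_mem [UniformSpace X]
    (hadd : ∀ s t x, α s (α t x) = α (s + t) x) (hV : V ∈ 𝓤 X) (hVsub : V ⊆ W)
    (hVW : ∀ t, Set.MapsTo (Prod.map (α t) (α t)) V W)
    {x : X} {t : G} (htx : (α t x, x) ∈ V) {y : X}
    (hy : y ∈ closure (Set.range fun s : G => α s x)) : (α t y, y) ∈ W ○ W ○ W := by
  obtain ⟨_, ⟨hyy', hy'y⟩, s, rfl⟩ :=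
    mem_closure_iff_nhds.1 hy _ (Filter.inter_mem (mem_nhds_left y hV) (mem_nhds_right y hV))
  exact ⟨α s x, ⟨α t (α s x), hVW t hyy',
    orbit_displacement_mem hadd hVW htx s⟩, hVsub hy'y⟩

end

theorem stmt2_general {G X : Type*}
    [AddCommGroup G] [TopologicalSpace G]
    [UniformSpace X]
    (α : G → X → X)
    (hzero : ∀ x, α 0 x = x)
    (hadd : ∀ s t x, α s (α t x) = α (s + t) x)
    (hcont : Continuous fun p : G × X => α p.1 p.2)
    (hinv : ∀ U ∈ 𝓤 X, ∃ U' ∈ 𝓤 X, ∀ (t : G), ∀ p : X × X, p ∈ U' →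
      (α t p.1, α t p.2) ∈ U)
    (x : X) :
    ∀ U ∈ 𝓤 X, ∃ O : Set G, IsOpen O ∧ (0 : G) ∈ O ∧ ∃ V ∈ 𝓤 X,
      (∀ t ∈ O, ∀ y ∈ closure (Set.range fun s : G => α s x),
        ∀ z ∈ closure (Set.range fun s : G => α s x),
          (y, z) ∈ V → (α t y, z) ∈ U) ∧
      (∀ t ∈ O, ∀ y ∈ closure (Set.range fun s : G => α s x), (α t y, y) ∈ U) := by
  intro U hU
  obtain ⟨W₁, hW₁, hW₁U⟩ := comp_mem_uniformity_sets hU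
  obtain ⟨W, hW, hWW₁⟩ := comp_mem_uniformity_sets hW₁
  have hW4 : W ○ W ○ W ○ W ⊆ U := by
    rw [SetRel.comp_assoc]
    exact (SetRel.comp_subset_comp hWW₁ hWW₁).trans hW₁U
  obtain ⟨U', hU', hU'W⟩ := hinv W hW
  set V := U' ∩ W
  have hV : V ∈ 𝓤 X := Filter.inter_mem hU' hW
  set O := interior {t : G | (α t x, x) ∈ V}
  have hO : {t : G | (α t x, x) ∈ V} ∈ 𝓝 (0 : G) := by
    have hcontx : Continuous fun t : G => α t x := hcont.comp (.prodMk_left x)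
    exact hcontx.continuousAt.preimage_mem_nhds (by rw [hzero]; exact mem_nhds_right x hV)
  have key : ∀ t ∈ O, ∀ y ∈ closure (Set.range fun s : G => α s x), ∀ z,
      (y, z) ∈ V → (α t y, z) ∈ U := fun t ht y hy z hyz =>
    hW4 ⟨y, orbitClosure_displacement_mem hadd hV Set.inter_subset_right
      (fun t p hp => hU'W t p hp.1) (interior_subset (s := {t : G | (α t x, x) ∈ V}) ht) hy,
      hyz.2⟩
  exact ⟨O, isOpen_interior, mem_interior_iff_mem_nhds.2 hO, V, hV,
    fun t ht y hy z _ => key t ht y hy z,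
    fun t ht y hy => key t ht y hy y (refl_mem_uniformity hV)⟩

/-- If `α` is a continuous action of a locally compact abelian group `G` on a
Hausdorff uniform space `(X, 𝒰)` and `𝒰` is `G`-invariant, then `α` is equicontinuous on each
orbit closure `H_x = closure {α t x : t ∈ G}`. -/
theorem stmt2 {G X : Type*}
    [AddCommGroup G] [TopologicalSpace G] [IsTopologicalAddGroup G]
    [LocallyCompactSpace G] [T2Space G]
    [UniformSpace X] [T2Space X]
    (α : G → X → X)
    (hzero : ∀ x, α 0 x = x)
    (hadd : ∀ s t x, α s (α t x) = α (s + t) x)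
    (hcont : Continuous fun p : G × X => α p.1 p.2)
    (hinv : ∀ U ∈ 𝓤 X, ∃ U' ∈ 𝓤 X, ∀ (t : G), ∀ p : X × X, p ∈ U' →
      (α t p.1, α t p.2) ∈ U)
    (x : X) :
    ∀ U ∈ 𝓤 X, ∃ O : Set G, IsOpen O ∧ (0 : G) ∈ O ∧ ∃ V ∈ 𝓤 X,
      (∀ t ∈ O, ∀ y ∈ closure (Set.range fun s : G => α s x),
        ∀ z ∈ closure (Set.range fun s : G => α s x),
          (y, z) ∈ V → (α t y, z) ∈ U) ∧
      (∀ t ∈ O, ∀ y ∈ closure (Set.range fun s : G => α s x), (α t y, y) ∈ U) :=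
  stmt2_general α hzero hadd hcont hinv x
end

section
/- Let α be an action of a locally compact abelian group G on a Hausdorff uniform space (X, 𝒰) and assume 𝒰 is G-invariant. Then an element x ∈ X is pseudo Bochner-type almost periodic (i.e. for every U ∈ 𝒰 the set P_U(x) = {t ∈ G : (α(t,x), x) ∈ U} is finitely relatively dense in G) if and only if the orbit O(x) = {α(t,x) : t ∈ G} is totally bounded in (X, 𝒰). -/
/-!
Invariance of the uniformity lets one move closeness along the orbit: `α g x` is close to
`α f x` exactly when `g - f` is an almost period of `x`, up to shrinking the entourage.
So a finite `F` with `P_U(x) + F = G` is the same thing as a finite `U`-net `{α f x : f ∈ F}`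
of the orbit, which is total boundedness of the orbit.
-/

open Uniformity Pointwise Set

section TotallyBounded

variable {X : Type*} [UniformSpace X]

theorem totallyBounded_iff_exists_finite_cover_prod_subset {s : Set X} :
    TotallyBounded s ↔
      ∀ U ∈ 𝓤 X, ∃ T : Set (Set X), T.Finite ∧ s ⊆ ⋃₀ T ∧ ∀ t ∈ T, t ×ˢ t ⊆ U := by
  constructor
  · intro hs U hU
    obtain ⟨V, hV, hVsymm, hVU⟩ := comp_symm_mem_uniformity_sets hU
    obtain ⟨C, hC, hsC⟩ := hs V hV
    refine ⟨(fun y => {x | (x, y) ∈ V}) '' C, hC.image _, by rwa [sUnion_image], ?_⟩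
    rintro _ ⟨y, -, rfl⟩ ⟨a, b⟩ ⟨ha, hb⟩
    exact hVU (SetRel.mem_comp.2 ⟨y, ha, hVsymm.symm _ _ hb⟩)
  · intro h U hU
    obtain ⟨T, hT, hsT, hTU⟩ := h U hU
    have : Finite {t // t ∈ T ∧ t.Nonempty} := (hT.subset fun _ ht => ht.1).to_subtype
    choose c hc using fun t : {t // t ∈ T ∧ t.Nonempty} => t.2.2
    refine ⟨range c, finite_range c, fun x hx => ?_⟩
    obtain ⟨t, htT, hxt⟩ := mem_sUnion.1 (hsT hx)
    exact mem_biUnion (mem_range_self ⟨t, htT, x, hxt⟩) (hTU t htT ⟨hxt, hc ⟨t, htT, x, hxt⟩⟩)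

theorem totallyBounded_range_iff {ι : Type*} (f : ι → X) :
    TotallyBounded (range f) ↔
      ∀ U ∈ 𝓤 X, ∃ F : Set ι, F.Finite ∧ range f ⊆ ⋃ i ∈ F, {y | (y, f i) ∈ U} := by
  rw [totallyBounded_iff_subset]
  refine forall₂_congr fun U _ => ?_
  rw [← image_univ, exists_subset_image_finite_and]
  simp only [subset_univ, true_and, biUnion_image]

end TotallyBounded

section AlmostPeriodic

variable {G X : Type*} [AddCommGroup G] (α : G → X → X)

def FinitelyRelativelyDense (A : Set G) : Prop :=
  ∃ F : Set G, F.Finite ∧ A + F = univ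

theorem act_add_mem_of_mem (hadd : ∀ s t x, α s (α t x) = α (s + t) x) {V V' : SetRel X X}
    (hV' : ∀ (t : G), ∀ p : X × X, p ∈ V' → (α t p.1, α t p.2) ∈ V) {x : X} {s t : G}
    (h : (α s x, α t x) ∈ V') (r : G) : (α (s + r) x, α (t + r) x) ∈ V := by
  simpa only [hadd, add_comm r] using hV' r _ h

theorem forall_finitelyRelativelyDense_iff_exists_finite_net [UniformSpace X]
    (hzero : ∀ x, α 0 x = x) (hadd : ∀ s t x, α s (α t x) = α (s + t) x)
    (hinv : ∀ U ∈ 𝓤 X, ∃ U' ∈ 𝓤 X, ∀ (t : G), ∀ p : X × X, p ∈ U' →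
      (α t p.1, α t p.2) ∈ U)
    (x : X) :
    (∀ U ∈ 𝓤 X, FinitelyRelativelyDense {t : G | (α t x, x) ∈ U}) ↔
      ∀ U ∈ 𝓤 X, ∃ F : Set G, F.Finite ∧
        range (fun t => α t x) ⊆ ⋃ f ∈ F, {y | (y, α f x) ∈ U} := by
  constructor
  · intro h U hU
    obtain ⟨V, hV, hVU⟩ := hinv U hU
    obtain ⟨F, hF, hPF⟩ := h V hV
    refine ⟨F, hF, ?_⟩
    rintro _ ⟨g, rfl⟩
    obtain ⟨p, hp, f, hf, rfl⟩ := mem_add.1 (hPF ▸ mem_univ g)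
    have hp0 : (α p x, α 0 x) ∈ V := by rwa [hzero]
    exact mem_biUnion hf (by simpa using act_add_mem_of_mem α hadd hVU hp0 f)
  · intro h U hU
    obtain ⟨V, hV, hVU⟩ := hinv U hU
    obtain ⟨F, hF, hcov⟩ := h V hV
    refine ⟨F, hF, eq_univ_of_forall fun g => ?_⟩
    obtain ⟨f, hf, hgf⟩ := mem_iUnion₂.1 (hcov (mem_range_self g))
    have hgf' := act_add_mem_of_mem α hadd hVU hgf (-f)
    rw [add_neg_cancel, hzero, ← sub_eq_add_neg] at hgf'
    exact mem_add.2 ⟨g - f, hgf', f, hf, sub_add_cancel g f⟩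

end AlmostPeriodic

theorem stmt3_general {G X : Type*}
    [AddCommGroup G]
    [UniformSpace X]
    (α : G → X → X)
    (hzero : ∀ x, α 0 x = x)
    (hadd : ∀ s t x, α s (α t x) = α (s + t) x)
    (hinv : ∀ U ∈ 𝓤 X, ∃ U' ∈ 𝓤 X, ∀ (t : G), ∀ p : X × X, p ∈ U' →
      (α t p.1, α t p.2) ∈ U)
    (x : X) :
    (∀ U ∈ 𝓤 X, ∃ F : Set G, F.Finite ∧ {t : G | (α t x, x) ∈ U} + F = Set.univ)
      ↔
    (∀ U ∈ 𝓤 X, ∃ T : Set (Set X), T.Finite ∧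
      (Set.range fun t : G => α t x) ⊆ ⋃₀ T ∧ ∀ s ∈ T, s ×ˢ s ⊆ U) :=
  (forall_finitelyRelativelyDense_iff_exists_finite_net α hzero hadd hinv x).trans <|
    (totallyBounded_range_iff _).symm.trans totallyBounded_iff_exists_finite_cover_prod_subset

/-- For an action `α` of a locally compact abelian group `G` on a Hausdorff
uniform space `(X, 𝒰)` with `𝒰` `G`-invariant, a point `x` is pseudo Bochner-type almost
periodic (every set of `U`-almost periods is finitely relatively dense) iff the orbit
`O(x) = {α t x : t ∈ G}` is totally bounded. -/
theorem stmt3 {G X : Type*}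
    [AddCommGroup G] [TopologicalSpace G] [IsTopologicalAddGroup G]
    [LocallyCompactSpace G] [T2Space G]
    [UniformSpace X] [T2Space X]
    (α : G → X → X)
    (hzero : ∀ x, α 0 x = x)
    (hadd : ∀ s t x, α s (α t x) = α (s + t) x)
    (hinv : ∀ U ∈ 𝓤 X, ∃ U' ∈ 𝓤 X, ∀ (t : G), ∀ p : X × X, p ∈ U' →
      (α t p.1, α t p.2) ∈ U)
    (x : X) :
    (∀ U ∈ 𝓤 X, ∃ F : Set G, F.Finite ∧ {t : G | (α t x, x) ∈ U} + F = Set.univ)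
      ↔
    (∀ U ∈ 𝓤 X, ∃ T : Set (Set X), T.Finite ∧
      (Set.range fun t : G => α t x) ⊆ ⋃₀ T ∧ ∀ s ∈ T, s ×ˢ s ⊆ U) :=
  stmt3_general α hzero hadd hinv x
end

section
/- Let a locally compact abelian group G act via α on a Hausdorff uniform space (X, 𝒰) with 𝒰 G-invariant, and let x ∈ X be pseudo Bochner-type almost periodic (for every U ∈ 𝒰 the set P_U(x) = {t ∈ G : (α(t,x), x) ∈ U} is finitely relatively dense). Then x is Bochner-type almost periodic (the orbit closure H_x is compact) if and only if H_x is complete in the uniformity inherited from 𝒰. -/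
/-!
A pseudo almost periodic orbit is totally bounded: if `P_{U'}(x) + F = G` with `F` finite and
`U'` chosen by invariance for `U`, then every `α t x` with `t = p + f`, `p ∈ P_{U'}(x)`, is
`U`-close to `α f x`, so the finitely many points `α f x`, `f ∈ F`, form a `U`-net. The orbit
closure is then totally bounded too, and a totally bounded set is compact iff it is complete.
-/

open Uniformity Pointwise

theorem totallyBounded_range_orbit_of_finitelyRelativelyDense {G X : Type*}
    [AddCommMagma G] [UniformSpace X] (α : G → X → X)
    (hadd : ∀ s t x, α s (α t x) = α (s + t) x)
    (hinv : ∀ U ∈ 𝓤 X, ∃ U' ∈ 𝓤 X, ∀ (t : G), ∀ p : X × X, p ∈ U' →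
      (α t p.1, α t p.2) ∈ U)
    (x : X)
    (hap : ∀ U ∈ 𝓤 X, ∃ F : Set G, F.Finite ∧ {t : G | (α t x, x) ∈ U} + F = Set.univ) :
    TotallyBounded (Set.range fun t : G => α t x) := by
  intro U hU
  obtain ⟨U', hU', hU'inv⟩ := hinv U hU
  obtain ⟨F, hFfin, hFcov⟩ := hap U' hU'
  refine ⟨(fun f : G => α f x) '' F, hFfin.image _, ?_⟩
  rintro _ ⟨t, rfl⟩
  obtain ⟨p, hp, f, hf, rfl⟩ : t ∈ {s : G | (α s x, x) ∈ U'} + F := hFcov ▸ Set.mem_univ t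
  refine Set.mem_iUnion₂.2 ⟨α f x, Set.mem_image_of_mem _ hf, ?_⟩
  simpa only [Set.mem_ofPred_eq, hadd, add_comm f p] using hU'inv f (α p x, x) hp

theorem stmt5_general {G X : Type*}
    [AddCommGroup G]
    [UniformSpace X]
    (α : G → X → X)
    (hadd : ∀ s t x, α s (α t x) = α (s + t) x)
    (hinv : ∀ U ∈ 𝓤 X, ∃ U' ∈ 𝓤 X, ∀ (t : G), ∀ p : X × X, p ∈ U' →
      (α t p.1, α t p.2) ∈ U)
    (x : X)
    (hap : ∀ U ∈ 𝓤 X, ∃ F : Set G, F.Finite ∧ {t : G | (α t x, x) ∈ U} + F = Set.univ) :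
    IsCompact (closure (Set.range fun t : G => α t x)) ↔
      IsComplete (closure (Set.range fun t : G => α t x)) := by
  have htb := totallyBounded_range_orbit_of_finitelyRelativelyDense α hadd hinv x hap
  exact ⟨IsCompact.isComplete, fun hc => isCompact_iff_totallyBounded_isComplete.2 ⟨htb.closure, hc⟩⟩

/-- Let a locally compact abelian group `G` act via `α` on a Hausdorff uniform
space `(X, 𝒰)` with `𝒰` `G`-invariant, and let `x` be pseudo Bochner-type almost periodic.
Then the orbit closure `H_x` is compact iff `H_x` is complete. -/
theorem stmt5 {G X : Type*}
    [AddCommGroup G] [TopologicalSpace G] [IsTopologicalAddGroup G]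
    [LocallyCompactSpace G] [T2Space G]
    [UniformSpace X] [T2Space X]
    (α : G → X → X)
    (hzero : ∀ x, α 0 x = x)
    (hadd : ∀ s t x, α s (α t x) = α (s + t) x)
    (hinv : ∀ U ∈ 𝓤 X, ∃ U' ∈ 𝓤 X, ∀ (t : G), ∀ p : X × X, p ∈ U' →
      (α t p.1, α t p.2) ∈ U)
    (x : X)
    (hap : ∀ U ∈ 𝓤 X, ∃ F : Set G, F.Finite ∧ {t : G | (α t x, x) ∈ U} + F = Set.univ) :
    IsCompact (closure (Set.range fun t : G => α t x)) ↔
      IsComplete (closure (Set.range fun t : G => α t x)) :=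
  stmt5_general α hadd hinv x hap
end

section
/- Let a locally compact abelian group G act via α on a Hausdorff uniform space (X, 𝒰) such that the action is equicontinuous (for every U ∈ 𝒰 there exists an open set O ⊆ G containing 0 with (α(s,x), x) ∈ U for all s ∈ O and all x ∈ X). Then x ∈ X is Bohr-type almost periodic (for every U ∈ 𝒰 the set P_U(x) = {t ∈ G : (α(t,x), x) ∈ U} is relatively dense in G) if and only if x is pseudo Bochner-type almost periodic (for every U ∈ 𝒰 the set P_U(x) is finitely relatively dense in G). -/
open Uniformity Pointwise

/-! Finitely relatively dense sets are relatively dense since finite sets are compact. Conversely,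
if `P_V(x) + K = G` with `K` compact and `V ○ V ⊆ U`, equicontinuity gives an open `O ∋ 0` with
`P_V(x) + O ⊆ P_U(x)`, and compactness covers `K` by finitely many translates `f + O`. -/

section RelativelyDense

variable {G : Type*} [AddCommGroup G] [TopologicalSpace G] [IsTopologicalAddGroup G]

theorem IsCompact.exists_finite_subset_add {K O : Set G} (hK : IsCompact K)
    (hO : (interior O).Nonempty) : ∃ F : Set G, F.Finite ∧ K ⊆ F + O := by
  obtain ⟨t, ht⟩ := compact_covered_by_add_left_translates hK hO
  refine ⟨-(t : Set G), t.finite_toSet.neg, fun k hk => ?_⟩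
  obtain ⟨g, hg, hgk⟩ := Set.mem_iUnion₂.1 (ht hk)
  exact ⟨-g, Set.neg_mem_neg.2 hg, g + k, hgk, neg_add_cancel_left g k⟩

theorem exists_finite_add_add_eq_univ_of_isCompact {A K O : Set G} (hK : IsCompact K)
    (hAK : A + K = Set.univ) (hO : (interior O).Nonempty) :
    ∃ F : Set G, F.Finite ∧ A + O + F = Set.univ := by
  obtain ⟨F, hF, hKF⟩ := hK.exists_finite_subset_add hO
  refine ⟨F, hF, Set.eq_univ_of_univ_subset ?_⟩
  calc Set.univ = A + K := hAK.symm
    _ ⊆ A + (F + O) := Set.add_subset_add_left hKF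
    _ = A + O + F := by rw [add_comm F, add_assoc]

end RelativelyDense

open SetRel in
theorem setOf_mem_add_subset_setOf_mem_comp {G X : Type*} [AddCommMagma G]
    {α : G → X → X} (hadd : ∀ s t x, α s (α t x) = α (s + t) x) {V : Set (X × X)} {O : Set G}
    (hO : ∀ s ∈ O, ∀ y : X, (α s y, y) ∈ V) (x : X) :
    {t : G | (α t x, x) ∈ V} + O ⊆ {t : G | (α t x, x) ∈ V ○ V} := by
  rintro _ ⟨t, ht, s, hs, rfl⟩
  have hstep : (α (t + s) x, α t x) ∈ V := by
    simpa only [hadd, add_comm s t] using hO s hs (α t x)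
  exact ⟨α t x, hstep, ht⟩

theorem stmt6_general {G X : Type*}
    [AddCommGroup G] [TopologicalSpace G] [IsTopologicalAddGroup G]
    [UniformSpace X]
    (α : G → X → X)
    (hadd : ∀ s t x, α s (α t x) = α (s + t) x)
    (hequi : ∀ U ∈ 𝓤 X, ∃ O : Set G, IsOpen O ∧ (0 : G) ∈ O ∧
      ∀ s ∈ O, ∀ y : X, (α s y, y) ∈ U)
    (x : X) :
    (∀ U ∈ 𝓤 X, ∃ K : Set G, IsCompact K ∧ {t : G | (α t x, x) ∈ U} + K = Set.univ)
      ↔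
    (∀ U ∈ 𝓤 X, ∃ F : Set G, F.Finite ∧ {t : G | (α t x, x) ∈ U} + F = Set.univ) := by
  refine ⟨fun h U hU => ?_, fun h U hU => ?_⟩
  · obtain ⟨V, hV, hVU⟩ := comp_mem_uniformity_sets hU
    obtain ⟨O, hO, hO0, hOV⟩ := hequi V hV
    obtain ⟨K, hK, hVK⟩ := h V hV
    obtain ⟨F, hF, hcover⟩ :=
      exists_finite_add_add_eq_univ_of_isCompact hK hVK ⟨0, by rwa [hO.interior_eq]⟩
    refine ⟨F, hF, Set.eq_univ_of_univ_subset ?_⟩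
    rw [← hcover]
    gcongr
    exact (setOf_mem_add_subset_setOf_mem_comp hadd hOV x).trans fun t ht => hVU ht
  · obtain ⟨F, hF, hUF⟩ := h U hU
    exact ⟨F, hF.isCompact, hUF⟩

/-- Let a locally compact abelian group `G` act equicontinuously via `α` on a
Hausdorff uniform space `(X, 𝒰)`. Then `x` is Bohr-type almost periodic (all sets of almost
periods are relatively dense) iff `x` is pseudo Bochner-type almost periodic (all sets of
almost periods are finitely relatively dense). -/
theorem stmt6 {G X : Type*}
    [AddCommGroup G] [TopologicalSpace G] [IsTopologicalAddGroup G]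
    [LocallyCompactSpace G] [T2Space G]
    [UniformSpace X] [T2Space X]
    (α : G → X → X)
    (hzero : ∀ x, α 0 x = x)
    (hadd : ∀ s t x, α s (α t x) = α (s + t) x)
    (hequi : ∀ U ∈ 𝓤 X, ∃ O : Set G, IsOpen O ∧ (0 : G) ∈ O ∧
      ∀ s ∈ O, ∀ y : X, (α s y, y) ∈ U)
    (x : X) :
    (∀ U ∈ 𝓤 X, ∃ K : Set G, IsCompact K ∧ {t : G | (α t x, x) ∈ U} + K = Set.univ)
      ↔
    (∀ U ∈ 𝓤 X, ∃ F : Set G, F.Finite ∧ {t : G | (α t x, x) ∈ U} + F = Set.univ) :=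
  stmt6_general α hadd hequi x
end

section
/- Let a locally compact abelian group G act via a continuous action α on a complete Hausdorff uniform space (X, 𝒰) such that 𝒰 is G-invariant. Then for x ∈ X the following are equivalent: (i) x is Bohr-type almost periodic (for every U ∈ 𝒰 the set P_U(x) = {t ∈ G : (α(t,x), x) ∈ U} is relatively dense); (ii) x is Bochner-type almost periodic (the orbit closure H_x = closure of {α(t,x) : t ∈ G} is compact); (iii) x is pseudo Bochner-type almost periodic (for every U ∈ 𝒰 the set P_U(x) is finitely relatively dense). -/
open Uniformity Pointwise

/-!
Invariance of the uniformity says that the maps `α t` are uniformly equicontinuous, so a return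
time `p` (with `α p x` close to `x`) transports to `α (p + k) x` being close to `α k x`. Hence if
`P_U(x) + K = G` with `K` compact, the orbit of `x` is uniformly approximated by the compact set
`α(K, x)`; it is therefore totally bounded, and its closure is compact by completeness. Conversely,
if `{α s x : s ∈ F}` is a finite net of the orbit, applying `α (-s)` shows `P_U(x) + F = G`.
-/

open Set

theorem totallyBounded_of_forall_exists_totallyBounded_near {X : Type*}
    [UniformSpace X] {s : Set X}
    (h : ∀ V ∈ 𝓤 X, ∃ t, TotallyBounded t ∧ ∀ z ∈ s, ∃ y ∈ t, (z, y) ∈ V) :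
    TotallyBounded s := by
  intro V hV
  obtain ⟨W, hW, hWV⟩ := comp_mem_uniformity_sets hV
  obtain ⟨t, ht, hst⟩ := h W hW
  obtain ⟨T, hT, htT⟩ := ht W hW
  refine ⟨T, hT, fun z hz => ?_⟩
  obtain ⟨y, hy, hzy⟩ := hst z hz
  obtain ⟨c, hc, hyc⟩ := mem_iUnion₂.mp (htT hy)
  exact mem_iUnion₂.mpr ⟨c, hc, hWV ⟨y, hzy, hyc⟩⟩

section AlmostPeriodic

variable {G X : Type*} [AddCommGroup G] {α : G → X → X}

/-- The set `P_U(x)` of the paper. -/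
def returnTimes (α : G → X → X) (x : X) (U : Set (X × X)) : Set G :=
  {t | (α t x, x) ∈ U}

theorem exists_mem_near_of_returnTimes_add_eq_univ (hadd : ∀ s t x, α s (α t x) = α (s + t) x)
    {x : X} {U W : Set (X × X)} (hUW : ∀ p ∈ U, ∀ t, (α t p.1, α t p.2) ∈ W) {K : Set G}
    (hK : returnTimes α x U + K = univ) (t : G) : ∃ k ∈ K, (α t x, α k x) ∈ W := by
  obtain ⟨p, hp, k, hk, rfl⟩ : t ∈ returnTimes α x U + K := hK ▸ mem_univ t
  refine ⟨k, hk, ?_⟩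
  simpa only [hadd, add_comm k p] using hUW _ hp k

theorem isCompact_closure_range_of_returnTimes_add_compact [TopologicalSpace G] [UniformSpace X]
    [CompleteSpace X]
    (hadd : ∀ s t x, α s (α t x) = α (s + t) x) (hα : UniformEquicontinuous α) {x : X}
    (hx : Continuous fun t => α t x)
    (h : ∀ U ∈ 𝓤 X, ∃ K : Set G, IsCompact K ∧ returnTimes α x U + K = univ) :
    IsCompact (closure (range fun t => α t x)) := by
  refine (TotallyBounded.closure ?_).isCompact_of_isClosed isClosed_closure
  refine totallyBounded_of_forall_exists_totallyBounded_near fun W hW => ?_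
  obtain ⟨K, hK, hPK⟩ := h _ (hα W hW)
  refine ⟨_, (hK.image hx).totallyBounded, ?_⟩
  rintro _ ⟨t, rfl⟩
  obtain ⟨k, hk, htk⟩ := exists_mem_near_of_returnTimes_add_eq_univ hadd (fun _ hp => hp) hPK t
  exact ⟨_, mem_image_of_mem _ hk, htk⟩

theorem exists_finite_returnTimes_add_eq_univ [UniformSpace X] (hzero : ∀ x, α 0 x = x)
    (hadd : ∀ s t x, α s (α t x) = α (s + t) x) (hα : UniformEquicontinuous α) {x : X}
    (hx : TotallyBounded (range fun t => α t x)) {U : Set (X × X)} (hU : U ∈ 𝓤 X) :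
    ∃ F : Set G, F.Finite ∧ returnTimes α x U + F = univ := by
  obtain ⟨T, hTrange, hT, hcover⟩ := hx.exists_subset (hα U hU)
  rw [← image_univ] at hTrange hcover
  obtain ⟨F, -, hF, hFcover⟩ := (exists_subset_image_finite_and
    (p := fun T => _ ⊆ ⋃ y ∈ T, {z | (z, y) ∈ _})).mp ⟨T, hTrange, hT, hcover⟩
  refine ⟨F, hF, eq_univ_of_forall fun t => ?_⟩
  have ht := biUnion_image ▸ hFcover (mem_image_of_mem _ (mem_univ t))
  obtain ⟨s, hs, hts⟩ := mem_iUnion₂.mp ht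
  have hret : (α (-s + t) x, x) ∈ U := by
    simpa only [hadd, neg_add_cancel, hzero] using hts (-s)
  exact ⟨-s + t, hret, s, hs, neg_add_cancel_comm s t⟩

end AlmostPeriodic

theorem stmt7_general {G X : Type*}
    [AddCommGroup G] [TopologicalSpace G]
    [UniformSpace X] [CompleteSpace X]
    (α : G → X → X)
    (hzero : ∀ x, α 0 x = x)
    (hadd : ∀ s t x, α s (α t x) = α (s + t) x)
    (hcont : Continuous fun p : G × X => α p.1 p.2)
    (hinv : ∀ U ∈ 𝓤 X, ∃ U' ∈ 𝓤 X, ∀ (t : G), ∀ p : X × X, p ∈ U' →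
      (α t p.1, α t p.2) ∈ U)
    (x : X) :
    List.TFAE
      [ -- (i) Bohr-type almost periodic
        ∀ U ∈ 𝓤 X, ∃ K : Set G, IsCompact K ∧ {t : G | (α t x, x) ∈ U} + K = Set.univ,
        -- (ii) Bochner-type almost periodic
        IsCompact (closure (Set.range fun t : G => α t x)),
        -- (iii) pseudo Bochner-type almost periodic
        ∀ U ∈ 𝓤 X, ∃ F : Set G, F.Finite ∧ {t : G | (α t x, x) ∈ U} + F = Set.univ ] := by
  have hα : UniformEquicontinuous α := fun U hU =>
    let ⟨U', hU', h⟩ := hinv U hU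
    Filter.mem_of_superset hU' fun p hp t => h t p hp
  tfae_have 1 → 2 := isCompact_closure_range_of_returnTimes_add_compact hadd hα
    (hcont.comp (continuous_id.prodMk continuous_const))
  tfae_have 2 → 3 := fun h2 _ =>
    exists_finite_returnTimes_add_eq_univ hzero hadd hα
      (h2.totallyBounded.subset subset_closure)
  tfae_have 3 → 1 := fun h3 U hU =>
    let ⟨F, hF, hFU⟩ := h3 U hU
    ⟨F, hF.isCompact, hFU⟩
  tfae_finish

/-- **Main result I.** Let a locally compact abelian group `G` act continuously
via `α` on a complete Hausdorff uniform space `(X, 𝒰)` with `𝒰` `G`-invariant. Then for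
`x ∈ X`, Bohr-type, Bochner-type and pseudo Bochner-type almost periodicity are equivalent. -/
theorem stmt7 {G X : Type*}
    [AddCommGroup G] [TopologicalSpace G] [IsTopologicalAddGroup G]
    [LocallyCompactSpace G] [T2Space G]
    [UniformSpace X] [T2Space X] [CompleteSpace X]
    (α : G → X → X)
    (hzero : ∀ x, α 0 x = x)
    (hadd : ∀ s t x, α s (α t x) = α (s + t) x)
    (hcont : Continuous fun p : G × X => α p.1 p.2)
    (hinv : ∀ U ∈ 𝓤 X, ∃ U' ∈ 𝓤 X, ∀ (t : G), ∀ p : X × X, p ∈ U' →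
      (α t p.1, α t p.2) ∈ U)
    (x : X) :
    List.TFAE
      [ -- (i) Bohr-type almost periodic
        ∀ U ∈ 𝓤 X, ∃ K : Set G, IsCompact K ∧ {t : G | (α t x, x) ∈ U} + K = Set.univ,
        -- (ii) Bochner-type almost periodic
        IsCompact (closure (Set.range fun t : G => α t x)),
        -- (iii) pseudo Bochner-type almost periodic
        ∀ U ∈ 𝓤 X, ∃ F : Set G, F.Finite ∧ {t : G | (α t x, x) ∈ U} + F = Set.univ ] :=
  stmt7_general α hzero hadd hcont hinv x
end

section
/- Let a locally compact abelian group G act via α on a Hausdorff uniform space (X, 𝒰) with 𝒰 G-invariant, and fix x ∈ X. Then: (1) the operation ⊕ on the orbit O(x) = {α(t,x) : t ∈ G} given by α(t,x) ⊕ α(s,x) := α(s+t, x) is well-defined, i.e. if α(t,x) = α(t',x) and α(s,x) = α(s',x) then α(t+s, x) = α(t'+s', x), and (O(x), ⊕) is an abelian group with identity x = α(0,x) and inverse of α(t,x) equal to α(−t,x); (2) ⊕ is uniformly continuous, i.e. for every U ∈ 𝒰 there exists V ∈ 𝒰 such that whenever (α(s₁,x), α(s₂,x)) ∈ V and (α(t₁,x),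 α(t₂,x)) ∈ V one has (α(s₁+t₁, x), α(s₂+t₂, x)) ∈ U; (3) inversion is uniformly continuous, i.e. for every U ∈ 𝒰 there exists V ∈ 𝒰 such that (α(t,x), α(s,x)) ∈ V implies (α(−t,x), α(−s,x)) ∈ U. -/
open Uniformity

/-! The orbit operation is well defined because the action commutes with itself:
`α (t + s) x = α t (α s x)`, and the right-hand side only depends on the points `α s x` and,
after commuting, `α t x`. Both uniform continuity statements follow from the uniform
equicontinuity of the family `(α t)_t`, i.e. the `G`-invariance of the uniformity: addition is
handled by translating each coordinate separately and composing two entourages, and inversion by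
translating the pair `(α t x, α s x)` by `-t - s`, which swaps it into `(α (-s) x, α (-t) x)`. -/

section OrbitGroup

variable {G X : Type*} {α : G → X → X}

theorem orbit_add_congr [AddCommMagma G] (hadd : ∀ s t x, α s (α t x) = α (s + t) x)
    {x : X} {t t' s s' : G} (ht : α t x = α t' x) (hs : α s x = α s' x) :
    α (t + s) x = α (t' + s') x :=
  calc α (t + s) x = α t (α s' x) := by rw [← hs, hadd]
    _ = α s' (α t' x) := by rw [← ht, hadd, hadd, add_comm]
    _ = α (t' + s') x := by rw [hadd, add_comm]

theorem uniformEquicontinuous_of_forall_exists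
    [UniformSpace X] (hinv : ∀ U ∈ 𝓤 X, ∃ U' ∈ 𝓤 X, ∀ t : G, ∀ p : X × X, p ∈ U' →
      (α t p.1, α t p.2) ∈ U) :
    UniformEquicontinuous α := fun U hU =>
  let ⟨_, hU', hU'U⟩ := hinv U hU
  Filter.mem_of_superset hU' fun p hp t => hU'U t p hp

variable [UniformSpace X] (hα : UniformEquicontinuous α)
include hα

theorem UniformEquicontinuous.exists_orbit_add_mem [AddCommMagma G]
    (hadd : ∀ s t x, α s (α t x) = α (s + t) x) (x : X) {U : Set (X × X)} (hU : U ∈ 𝓤 X) :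
    ∃ V ∈ 𝓤 X, ∀ s₁ s₂ t₁ t₂ : G, (α s₁ x, α s₂ x) ∈ V → (α t₁ x, α t₂ x) ∈ V →
      (α (s₁ + t₁) x, α (s₂ + t₂) x) ∈ U := by
  obtain ⟨W, hW, hWU⟩ := comp_mem_uniformity_sets hU
  obtain ⟨V, hV, hVW⟩ := (hα W hW).exists_mem
  refine ⟨V, hV, fun s₁ s₂ t₁ t₂ hs ht => hWU ⟨α (s₂ + t₁) x, ?_, ?_⟩⟩
  · simpa only [hadd, add_comm t₁] using hVW _ hs t₁
  · simpa only [hadd] using hVW _ ht s₂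

theorem UniformEquicontinuous.exists_orbit_neg_mem [AddCommGroup G]
    (hadd : ∀ s t x, α s (α t x) = α (s + t) x) (x : X) {U : Set (X × X)} (hU : U ∈ 𝓤 X) :
    ∃ V ∈ 𝓤 X, ∀ t s : G, (α t x, α s x) ∈ V → (α (-t) x, α (-s) x) ∈ U := by
  obtain ⟨V, hV, hVU⟩ := (hα U hU).exists_mem
  refine ⟨Prod.swap ⁻¹' V, tendsto_swap_uniformity hV, fun t s h => ?_⟩
  have hswap := hVU (α s x, α t x) h (-t - s)
  simp only [hadd] at hswap
  rwa [sub_add_cancel, sub_add_eq_add_sub, neg_add_cancel, zero_sub] at hswap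

end OrbitGroup

theorem stmt8_general {G X : Type*}
    [AddCommGroup G]
    [UniformSpace X]
    (α : G → X → X)
    (hzero : ∀ x, α 0 x = x)
    (hadd : ∀ s t x, α s (α t x) = α (s + t) x)
    (hinv : ∀ U ∈ 𝓤 X, ∃ U' ∈ 𝓤 X, ∀ (t : G), ∀ p : X × X, p ∈ U' →
      (α t p.1, α t p.2) ∈ U)
    (x : X) :
    -- (1) `⊕` is well defined ...
    (∀ t t' s s' : G, α t x = α t' x → α s x = α s' x → α (t + s) x = α (t' + s') x)
    -- ... and `(O(x), ⊕)` is an abelian group: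
    ∧ (∀ t s r : G, α ((t + s) + r) x = α (t + (s + r)) x)        -- associativity
    ∧ (∀ t s : G, α (t + s) x = α (s + t) x)                      -- commutativity
    ∧ (α 0 x = x)                                                 -- identity element is `x`
    ∧ (∀ t : G, α (t + 0) x = α t x)                              -- `x` is neutral
    ∧ (∀ t : G, α (t + -t) x = α 0 x)                             -- inverse of `α t x` is `α (-t) x`
    -- (2) `⊕` is uniformly continuous:
    ∧ (∀ U ∈ 𝓤 X, ∃ V ∈ 𝓤 X, ∀ s₁ s₂ t₁ t₂ : G,
        (α s₁ x, α s₂ x) ∈ V → (α t₁ x, α t₂ x) ∈ V →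
          (α (s₁ + t₁) x, α (s₂ + t₂) x) ∈ U)
    -- (3) inversion is uniformly continuous:
    ∧ (∀ U ∈ 𝓤 X, ∃ V ∈ 𝓤 X, ∀ t s : G,
        (α t x, α s x) ∈ V → (α (-t) x, α (-s) x) ∈ U) := by
  have hα : UniformEquicontinuous α := uniformEquicontinuous_of_forall_exists hinv
  exact ⟨fun _ _ _ _ => orbit_add_congr hadd,
    fun t s r => by rw [add_assoc],
    fun t s => by rw [add_comm],
    hzero x,
    fun t => by rw [add_zero],
    fun t => by rw [add_neg_cancel],
    fun _ => hα.exists_orbit_add_mem hadd x,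
    fun _ => hα.exists_orbit_neg_mem hadd x⟩

/-- Let a locally compact abelian group `G` act via `α` on a Hausdorff uniform
space `(X, 𝒰)` with `𝒰` `G`-invariant, and fix `x ∈ X`. Then the operation
`α t x ⊕ α s x := α (s + t) x` on the orbit is well defined and turns the orbit into an abelian
group with identity `x = α 0 x` and inverse `α (-t) x`, and both the addition and the inversion
are uniformly continuous. -/
theorem stmt8 {G X : Type*}
    [AddCommGroup G] [TopologicalSpace G] [IsTopologicalAddGroup G]
    [LocallyCompactSpace G] [T2Space G]
    [UniformSpace X] [T2Space X]
    (α : G → X → X)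
    (hzero : ∀ x, α 0 x = x)
    (hadd : ∀ s t x, α s (α t x) = α (s + t) x)
    (hinv : ∀ U ∈ 𝓤 X, ∃ U' ∈ 𝓤 X, ∀ (t : G), ∀ p : X × X, p ∈ U' →
      (α t p.1, α t p.2) ∈ U)
    (x : X) :
    -- (1) `⊕` is well defined ...
    (∀ t t' s s' : G, α t x = α t' x → α s x = α s' x → α (t + s) x = α (t' + s') x)
    -- ... and `(O(x), ⊕)` is an abelian group:
    ∧ (∀ t s r : G, α ((t + s) + r) x = α (t + (s + r)) x)        -- associativity
    ∧ (∀ t s : G, α (t + s) x = α (s + t) x)                      -- commutativity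
    ∧ (α 0 x = x)                                                 -- identity element is `x`
    ∧ (∀ t : G, α (t + 0) x = α t x)                              -- `x` is neutral
    ∧ (∀ t : G, α (t + -t) x = α 0 x)                             -- inverse of `α t x` is `α (-t) x`
    -- (2) `⊕` is uniformly continuous:
    ∧ (∀ U ∈ 𝓤 X, ∃ V ∈ 𝓤 X, ∀ s₁ s₂ t₁ t₂ : G,
        (α s₁ x, α s₂ x) ∈ V → (α t₁ x, α t₂ x) ∈ V →
          (α (s₁ + t₁) x, α (s₂ + t₂) x) ∈ U)
    -- (3) inversion is uniformly continuous:
    ∧ (∀ U ∈ 𝓤 X, ∃ V ∈ 𝓤 X, ∀ t s : G,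
        (α t x, α s x) ∈ V → (α (-t) x, α (-s) x) ∈ U) :=
  stmt8_general α hzero hadd hinv x
end

section
/- Let G be a locally compact abelian group, let 𝒰 be a G-invariant uniformity on a set X, and let α: G × X → X be any group action. For U ∈ 𝒰 and an open set O ⊆ G containing 0 define V[O,U] := {(α(t,x), y) : t ∈ O, (x,y) ∈ U}, and set 𝒰_mix := {V ⊆ X × X : there exist U ∈ 𝒰 and an open O ∋ 0 with V[O,U] ⊆ V}. Then 𝒰_mix is a uniformity on X: every element of 𝒰_mix contains the diagonal; 𝒰_mix is closed upward; 𝒰_mix is closed under finite intersection; for every V ∈ 𝒰_mix there is V' ∈ 𝒰_mix with V' ∘ V' ⊆ V; and for every V ∈ 𝒰_mix the set V⁻¹ = {(x,y) : (y,x) ∈ V} belongs to 𝒰_mix. -/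
/-!
`𝒰_mix` is the image of the product filter `𝓝 0 ×ˢ 𝓤 X` under `(t, (x, y)) ↦ (α t x, y)`, hence
a filter, with the sets `V[O,U]` (`O` any neighbourhood of `0`) as a basis. Reflexivity is the
case `t = 0`. For composition and symmetry, invariance of `𝒰` lets one move a pair by an element
of `G`: a chain through `V[O',W'] ∘ V[O',W']` becomes a `W ∘ W`-chain moved by `s + s'`, where
`O' + O' ⊆ O`, and the swap of `V[O,U]` contains `V[-O,U']`.
-/

open Uniformity

/-- The basic mixed entourage `V[O,U] = {(α t x, y) : t ∈ O, (x,y) ∈ U}`. -/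
def mixEnt {G X : Type*} (α : G → X → X) (O : Set G) (U : Set (X × X)) : Set (X × X) :=
  {p : X × X | ∃ t ∈ O, ∃ q ∈ U, p.1 = α t q.1 ∧ p.2 = q.2}

/-- The mixed uniformity `𝒰_mix`: all supersets of some `V[O,U]` with `U ∈ 𝒰` and `O` an open
set containing `0`. -/
def mixUniformity {G X : Type*} [AddCommGroup G] [TopologicalSpace G] [UniformSpace X]
    (α : G → X → X) : Set (Set (X × X)) :=
  {V : Set (X × X) | ∃ U ∈ 𝓤 X, ∃ O : Set G, IsOpen O ∧ (0 : G) ∈ O ∧ mixEnt α O U ⊆ V}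

open Filter Topology SetRel

section MixedUniformity

variable {G X : Type*} (α : G → X → X)

theorem mixEnt_eq_image2 (O : Set G) (U : Set (X × X)) :
    mixEnt α O U = Set.image2 (fun t q => (α t q.1, q.2)) O U := by
  ext ⟨a, b⟩
  simp [mixEnt, eq_comm]

theorem mixEnt_subset_mixEnt {O O' : Set G} {U U' : Set (X × X)} (hO : O ⊆ O') (hU : U ⊆ U') :
    mixEnt α O U ⊆ mixEnt α O' U' := by
  simpa only [mixEnt_eq_image2] using Set.image2_subset hO hU

def mixFilter [UniformSpace X] [Zero G] [TopologicalSpace G] : Filter (X × X) :=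
  map₂ (fun t q => (α t q.1, q.2)) (𝓝 0) (𝓤 X)

theorem mem_mixFilter_iff [UniformSpace X] [Zero G] [TopologicalSpace G] {V : Set (X × X)} :
    V ∈ mixFilter α ↔ ∃ O ∈ 𝓝 (0 : G), ∃ U ∈ 𝓤 X, mixEnt α O U ⊆ V := by
  simp only [mixFilter, mem_map₂_iff, mixEnt_eq_image2]

theorem mixUniformity_eq [UniformSpace X] [AddCommGroup G] [TopologicalSpace G] :
    mixUniformity α = (mixFilter α).sets := by
  ext V
  rw [Filter.mem_sets, mem_mixFilter_iff]
  constructor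
  · rintro ⟨U, hU, O, hO, h0, hsub⟩
    exact ⟨O, hO.mem_nhds h0, U, hU, hsub⟩
  · rintro ⟨O, hO, U, hU, hsub⟩
    obtain ⟨O', hO'O, hO', h0⟩ := mem_nhds_iff.mp hO
    refine ⟨U, hU, O', hO', h0, subset_trans ?_ hsub⟩
    exact mixEnt_subset_mixEnt α hO'O subset_rfl

theorem refl_mem_of_mem_mixFilter [UniformSpace X] [Zero G] [TopologicalSpace G]
    (hzero : ∀ x, α 0 x = x) {V : Set (X × X)} (hV : V ∈ mixFilter α) (x : X) : (x, x) ∈ V := by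
  obtain ⟨O, hO, U, hU, hsub⟩ := (mem_mixFilter_iff α).1 hV
  exact hsub ⟨0, mem_of_mem_nhds hO, (x, x), refl_mem_uniformity hU, (hzero x).symm, rfl⟩

section Action

variable [AddGroup G] {α}
variable (hzero : ∀ x, α 0 x = x) (hadd : ∀ s t x, α s (α t x) = α (s + t) x)
include hzero hadd

theorem mixEnt_comp_mixEnt_subset {O O' : Set G} {W W' : Set (X × X)}
    (hO : ∀ s ∈ O', ∀ t ∈ O', s + t ∈ O) (hW : ∀ t, ∀ p ∈ W', (α t p.1, α t p.2) ∈ W) :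
    mixEnt α O' W' ○ mixEnt α O' W ⊆ mixEnt α O (W ○ W) := by
  rintro ⟨a, b⟩ ⟨z, ⟨s, hs, ⟨x, y⟩, hxy, ha, hz⟩, ⟨s', hs', ⟨x', y'⟩, hxy', hz', hb⟩⟩
  dsimp only at ha hz hz' hb hxy
  rw [← hz, hz'] at hxy
  -- translating back by `-s'` lands the middle point on `x'`, so the two `W`-steps compose
  have hx' : (α (-s') x, x') ∈ W := by
    simpa [hadd, hzero] using hW (-s') (x, α s' x') hxy
  refine ⟨s + s', hO s hs s' hs', (α (-s') x, y'), ⟨x', hx', hxy'⟩, ?_, hb⟩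
  simp only [ha, hadd, add_neg_cancel_right]

theorem mixEnt_neg_swap_subset {O : Set G} {W W' : Set (X × X)}
    (hW : ∀ t, ∀ p ∈ W', (α t p.1, α t p.2) ∈ W) :
    mixEnt α (-O) (Prod.swap ⁻¹' W') ⊆ Prod.swap ⁻¹' mixEnt α O W := by
  rintro ⟨a, b⟩ ⟨t, ht, ⟨x, y⟩, hxy, ha, hb⟩
  exact ⟨-t, ht, (α t y, α t x), hW t (y, x) hxy, by simpa [hadd, hzero] using hb, ha⟩

variable [UniformSpace X] [TopologicalSpace G] (hα : UniformEquicontinuous α)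
include hα

theorem exists_comp_subset_of_mem_mixFilter [ContinuousAdd G] {V : Set (X × X)}
    (hV : V ∈ mixFilter α) : ∃ V' ∈ mixFilter α, V' ○ V' ⊆ V := by
  obtain ⟨O, hO, U, hU, hsub⟩ := (mem_mixFilter_iff α).1 hV
  obtain ⟨W, hW, hWW⟩ := comp_mem_uniformity_sets hU
  obtain ⟨O', hO', hO'O⟩ := exists_nhds_zero_half hO
  set W₀ := {p : X × X | ∀ t, (α t p.1, α t p.2) ∈ W}
  set W' := W ∩ W₀
  refine ⟨mixEnt α O' W',
    (mem_mixFilter_iff α).2 ⟨O', hO', W', inter_mem hW (hα W hW), subset_rfl⟩, ?_⟩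
  calc mixEnt α O' W' ○ mixEnt α O' W'
      ⊆ mixEnt α O' W₀ ○ mixEnt α O' W :=
        comp_subset_comp (mixEnt_subset_mixEnt α subset_rfl Set.inter_subset_right)
          (mixEnt_subset_mixEnt α subset_rfl Set.inter_subset_left)
    _ ⊆ mixEnt α O (W ○ W) := mixEnt_comp_mixEnt_subset hzero hadd hO'O fun t _ hp => hp t
    _ ⊆ V := (mixEnt_subset_mixEnt α subset_rfl hWW).trans hsub

theorem swap_preimage_mem_mixFilter [ContinuousNeg G] {V : Set (X × X)}
    (hV : V ∈ mixFilter α) : Prod.swap ⁻¹' V ∈ mixFilter α := by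
  obtain ⟨O, hO, U, hU, hsub⟩ := (mem_mixFilter_iff α).1 hV
  set U₀ := {p : X × X | ∀ t, (α t p.1, α t p.2) ∈ U}
  refine (mem_mixFilter_iff α).2 ⟨-O, continuous_neg.tendsto' 0 0 neg_zero hO,
    Prod.swap ⁻¹' U₀, tendsto_swap_uniformity (hα U hU), ?_⟩
  exact (mixEnt_neg_swap_subset hzero hadd (W' := U₀) fun t _ hp => hp t).trans
    (Set.preimage_mono hsub)

end Action

end MixedUniformity

theorem stmt10_general {G X : Type*}
    [AddCommGroup G] [TopologicalSpace G] [IsTopologicalAddGroup G]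
    [UniformSpace X]
    (α : G → X → X)
    (hzero : ∀ x, α 0 x = x)
    (hadd : ∀ s t x, α s (α t x) = α (s + t) x)
    (hinv : ∀ U ∈ 𝓤 X, ∃ U' ∈ 𝓤 X, ∀ (t : G), ∀ p : X × X, p ∈ U' →
      (α t p.1, α t p.2) ∈ U) :
    -- every element of `𝒰_mix` contains the diagonal
    (∀ V ∈ mixUniformity α, ∀ x : X, (x, x) ∈ V)
    -- `𝒰_mix` is closed upward
    ∧ (∀ V ∈ mixUniformity α, ∀ W : Set (X × X), V ⊆ W → W ∈ mixUniformity α)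
    -- `𝒰_mix` is closed under finite intersections
    ∧ (∀ V₁ ∈ mixUniformity α, ∀ V₂ ∈ mixUniformity α, V₁ ∩ V₂ ∈ mixUniformity α)
    -- for each `V ∈ 𝒰_mix` there is `V' ∈ 𝒰_mix` with `V' ∘ V' ⊆ V`
    ∧ (∀ V ∈ mixUniformity α, ∃ V' ∈ mixUniformity α,
        {p : X × X | ∃ z : X, (p.1, z) ∈ V' ∧ (z, p.2) ∈ V'} ⊆ V)
    -- `𝒰_mix` is closed under inverses
    ∧ (∀ V ∈ mixUniformity α, {p : X × X | (p.2, p.1) ∈ V} ∈ mixUniformity α) := by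
  have hα : UniformEquicontinuous α := fun U hU =>
    let ⟨U', hU', hU'U⟩ := hinv U hU
    mem_of_superset hU' fun p hp t => hU'U t p hp
  rw [mixUniformity_eq]
  exact ⟨fun _ hV => refl_mem_of_mem_mixFilter α hzero hV,
    fun _ hV _ => mem_of_superset hV,
    fun _ hV₁ _ hV₂ => inter_mem hV₁ hV₂,
    fun _ hV => exists_comp_subset_of_mem_mixFilter hzero hadd hα hV,
    fun _ hV => swap_preimage_mem_mixFilter hzero hadd hα hV⟩

/-- If a locally compact abelian group `G` acts via `α` on a set `X` carrying
a `G`-invariant uniformity `𝒰`, then `𝒰_mix` is a uniformity on `X`. -/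
theorem stmt10 {G X : Type*}
    [AddCommGroup G] [TopologicalSpace G] [IsTopologicalAddGroup G]
    [LocallyCompactSpace G] [T2Space G]
    [UniformSpace X]
    (α : G → X → X)
    (hzero : ∀ x, α 0 x = x)
    (hadd : ∀ s t x, α s (α t x) = α (s + t) x)
    (hinv : ∀ U ∈ 𝓤 X, ∃ U' ∈ 𝓤 X, ∀ (t : G), ∀ p : X × X, p ∈ U' →
      (α t p.1, α t p.2) ∈ U) :
    -- every element of `𝒰_mix` contains the diagonal
    (∀ V ∈ mixUniformity α, ∀ x : X, (x, x) ∈ V)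
    -- `𝒰_mix` is closed upward
    ∧ (∀ V ∈ mixUniformity α, ∀ W : Set (X × X), V ⊆ W → W ∈ mixUniformity α)
    -- `𝒰_mix` is closed under finite intersections
    ∧ (∀ V₁ ∈ mixUniformity α, ∀ V₂ ∈ mixUniformity α, V₁ ∩ V₂ ∈ mixUniformity α)
    -- for each `V ∈ 𝒰_mix` there is `V' ∈ 𝒰_mix` with `V' ∘ V' ⊆ V`
    ∧ (∀ V ∈ mixUniformity α, ∃ V' ∈ mixUniformity α,
        {p : X × X | ∃ z : X, (p.1, z) ∈ V' ∧ (z, p.2) ∈ V'} ⊆ V)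
    -- `𝒰_mix` is closed under inverses
    ∧ (∀ V ∈ mixUniformity α, {p : X × X | (p.2, p.1) ∈ V} ∈ mixUniformity α) :=
  stmt10_general α hzero hadd hinv
end

section
/- Let a locally compact abelian group G act via α on a set X carrying a G-invariant uniformity 𝒰, and let 𝒰_mix be the mixed uniformity (the collection of all V ⊆ X × X containing some V[O,U] = {(α(t,x), y) : t ∈ O, (x,y) ∈ U} with U ∈ 𝒰 and O ⊆ G an open set containing 0). Then: (a) the action α is equicontinuous on (X, 𝒰_mix) and 𝒰_mix ⊆ 𝒰; (b) if 𝒰' is any uniformity on X with 𝒰' ⊆ 𝒰 such that α is equicontinuous on (X, 𝒰'), then 𝒰' ⊆ 𝒰_mix. In particular, α is equicontinuous on (X, 𝒰) if and only if 𝒰 = 𝒰_mix. -/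
open Uniformity

/-- The action `α` is equicontinuous with respect to a collection `𝒱` of entourages. -/
def equiOn {G X : Type*} [AddCommGroup G] [TopologicalSpace G]
    (α : G → X → X) (𝒱 : Set (Set (X × X))) : Prop :=
  ∀ V ∈ 𝒱, ∃ O : Set G, IsOpen O ∧ (0 : G) ∈ O ∧ ∀ s ∈ O, ∀ x : X, (α s x, x) ∈ V

/-- A collection of subsets of `X × X` is a uniformity on `X`. -/
def isUniformityOn {X : Type*} (𝒱 : Set (Set (X × X))) : Prop :=
  𝒱.Nonempty
  ∧ (∀ V ∈ 𝒱, ∀ x : X, (x, x) ∈ V)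
  ∧ (∀ V ∈ 𝒱, ∀ W : Set (X × X), V ⊆ W → W ∈ 𝒱)
  ∧ (∀ V ∈ 𝒱, ∀ V' ∈ 𝒱, V ∩ V' ∈ 𝒱)
  ∧ (∀ V ∈ 𝒱, ∃ W ∈ 𝒱, {p : X × X | ∃ z : X, (p.1, z) ∈ W ∧ (z, p.2) ∈ W} ⊆ V)
  ∧ (∀ V ∈ 𝒱, {p : X × X | (p.2, p.1) ∈ V} ∈ 𝒱)

/-!
`V[O,U]` contains the pairs `(α t x, x)` for `t ∈ O`, and, since `α 0 = id`, all of `U`.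
Conversely, if `α` moves every point `W`-close for times in `O`, then `V[O,W] ⊆ W ○ W`; so when
`α` is equicontinuous for `𝒰'`, every `V ∈ 𝒰'` contains some `V[O,W]` with `W ∈ 𝒰' ⊆ 𝒰`.
-/

open SetRel

theorem mixEnt_subset_of_forall_mem {G X : Type*} {α : G → X → X} {O : Set G}
    {V W : Set (X × X)} (hWV : W ○ W ⊆ V) (hOW : ∀ s ∈ O, ∀ x, (α s x, x) ∈ W) :
    mixEnt α O W ⊆ V := by
  rintro ⟨a, b⟩ ⟨t, ht, ⟨x, y⟩, hxy, ha : a = α t x, hb : b = y⟩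
  subst ha hb
  exact hWV ⟨x, hOW t ht x, hxy⟩

section MixedUniformity

variable {G X : Type*} [AddCommGroup G] [TopologicalSpace G] [UniformSpace X] (α : G → X → X)

theorem equiOn_mixUniformity : equiOn α (mixUniformity α) := by
  rintro V ⟨U, hU, O, hO, h0, hsub⟩
  exact ⟨O, hO, h0, fun s hs x => hsub ⟨s, hs, (x, x), refl_mem_uniformity hU, rfl, rfl⟩⟩

variable {α}

theorem mixUniformity_subset_uniformity (hzero : ∀ x, α 0 x = x) :
    mixUniformity α ⊆ (𝓤 X).sets := by
  rintro V ⟨U, hU, O, -, h0, hsub⟩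
  exact Filter.mem_of_superset hU fun p hp => hsub ⟨0, h0, p, hp, (hzero p.1).symm, rfl⟩

theorem subset_mixUniformity_of_equiOn {𝒰' : Set (Set (X × X))}
    (hcomp : ∀ V ∈ 𝒰', ∃ W ∈ 𝒰', W ○ W ⊆ V) (hsub : 𝒰' ⊆ (𝓤 X).sets) (hequi : equiOn α 𝒰') :
    𝒰' ⊆ mixUniformity α := by
  intro V hV
  obtain ⟨W, hW, hWV⟩ := hcomp V hV
  obtain ⟨O, hO, h0, hOW⟩ := hequi W hW
  exact ⟨W, hsub hW, O, hO, h0, mixEnt_subset_of_forall_mem hWV hOW⟩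

end MixedUniformity

theorem stmt11_general {G X : Type*}
    [AddCommGroup G] [TopologicalSpace G]
    [UniformSpace X]
    (α : G → X → X)
    (hzero : ∀ x, α 0 x = x) :
    -- (a)
    (equiOn α (mixUniformity α) ∧ mixUniformity α ⊆ (𝓤 X).sets)
    -- (b)
    ∧ (∀ 𝒰' : Set (Set (X × X)), isUniformityOn 𝒰' → 𝒰' ⊆ (𝓤 X).sets →
        equiOn α 𝒰' → 𝒰' ⊆ mixUniformity α)
    -- in particular
    ∧ (equiOn α (𝓤 X).sets ↔ (𝓤 X).sets = mixUniformity α) := by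
  have hmix := mixUniformity_subset_uniformity hzero
  refine ⟨⟨equiOn_mixUniformity α, hmix⟩,
    fun 𝒰' h𝒰' => subset_mixUniformity_of_equiOn h𝒰'.2.2.2.2.1, ⟨fun hequi => ?_, fun h => ?_⟩⟩
  · exact (subset_mixUniformity_of_equiOn (fun _ => comp_mem_uniformity_sets) subset_rfl
      hequi).antisymm hmix
  · exact h ▸ equiOn_mixUniformity α

/-- Characterization of the mixed uniformity: (a) `α` is equicontinuous on
`(X, 𝒰_mix)` and `𝒰_mix ⊆ 𝒰`; (b) `𝒰_mix` is the finest such uniformity; in particular `α`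
is equicontinuous on `(X, 𝒰)` iff `𝒰 = 𝒰_mix`. -/
theorem stmt11 {G X : Type*}
    [AddCommGroup G] [TopologicalSpace G] [IsTopologicalAddGroup G]
    [LocallyCompactSpace G] [T2Space G]
    [UniformSpace X]
    (α : G → X → X)
    (hzero : ∀ x, α 0 x = x)
    (hadd : ∀ s t x, α s (α t x) = α (s + t) x)
    (hinv : ∀ U ∈ 𝓤 X, ∃ U' ∈ 𝓤 X, ∀ (t : G), ∀ p : X × X, p ∈ U' →
      (α t p.1, α t p.2) ∈ U) :
    -- (a)
    (equiOn α (mixUniformity α) ∧ mixUniformity α ⊆ (𝓤 X).sets)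
    -- (b)
    ∧ (∀ 𝒰' : Set (Set (X × X)), isUniformityOn 𝒰' → 𝒰' ⊆ (𝓤 X).sets →
        equiOn α 𝒰' → 𝒰' ⊆ mixUniformity α)
    -- in particular
    ∧ (equiOn α (𝓤 X).sets ↔ (𝓤 X).sets = mixUniformity α) :=
  stmt11_general α hzero
end

section
/- Let a locally compact abelian group G act via α on a set X carrying a G-invariant uniformity 𝒰. If both 𝒰 and the topology of G are metrizable, and (X, 𝒰) is complete, then (X, 𝒰_mix) is complete, where 𝒰_mix is the mixed uniformity. -/
/-!
Since `F` is Cauchy, there are points `x n` with `F` eventually `V[O n, U n]`-close to `x n`; in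
particular consecutive points give `t n ∈ O n` with `(-t n +ᵥ x n, x (n + 1)) ∈ U n`. If `O n`
and `U n` shrink fast enough, the partial sums `p n = ∑ k < n, t k` converge in `G` (complete,
being locally compact) to some `r`, and by invariance `p n +ᵥ x n` is Cauchy in `X`, with limit
`ξ`. Then `F` converges to `-r +ᵥ ξ` in the mixed uniformity.
-/

open Uniformity

open Filter Topology

theorem Filter.exists_seq_of_forall_exists_prod_subset {X : Type*} {F : Filter X} [F.NeBot]
    {V : ℕ → Set (X × X)} (hV : ∀ n, ∃ A ∈ F, A ×ˢ A ⊆ V n) :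
    ∃ x : ℕ → X, ∀ n, (x n, x (n + 1)) ∈ V n ∧ {y | (x n, y) ∈ V n} ∈ F := by
  choose A hAF hAV using hV
  choose x hx using fun n => F.nonempty_of_mem (inter_mem (hAF n) (hAF (n - 1)))
  exact ⟨x, fun n => ⟨hAV n ⟨(hx n).1, (hx (n + 1)).2⟩,
    mem_of_superset (hAF n) fun y hy => hAV n ⟨(hx n).1, hy⟩⟩⟩

theorem exists_hasAntitoneBasis_uniformity_cauchySeq (X : Type*) [UniformSpace X]
    [(𝓤 X).IsCountablyGenerated] :
    ∃ W : ℕ → Set (X × X), (𝓤 X).HasAntitoneBasis W ∧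
      ∀ w : ℕ → X, (∀ n, (w n, w (n + 1)) ∈ W n) → CauchySeq w := by
  let _ := UniformSpace.pseudoMetricSpace X
  refine ⟨fun n => {p | dist p.1 p.2 < (1 / 2 : ℝ) ^ n},
    ⟨Metric.uniformity_basis_dist_pow (by norm_num) (by norm_num), fun m n hmn p hp => ?_⟩,
    fun w hw => cauchySeq_of_le_geometric (1 / 2) 1 (by norm_num) fun n => ?_⟩
  · exact lt_of_lt_of_le (α := ℝ) hp (pow_le_pow_of_le_one (by norm_num) (by norm_num) hmn)
  · simpa using (hw n).out.le

theorem exists_seq_nhds_zero_tendsto_sum_range (G : Type*) [AddCommGroup G]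
    [TopologicalSpace G] [IsTopologicalAddGroup G] [WeaklyLocallyCompactSpace G]
    [FirstCountableTopology G] :
    ∃ O : ℕ → Set G, (∀ n, IsOpen (O n)) ∧ (∀ n, (0 : G) ∈ O n) ∧
      Tendsto O atTop (𝓝 0).smallSets ∧
      ∀ t : ℕ → G, (∀ n, t n ∈ O n) →
        ∃ r, Tendsto (fun n => ∑ k ∈ Finset.range n, t k) atTop (𝓝 r) := by
  let _ := IsTopologicalAddGroup.rightUniformSpace G
  have _ := isUniformAddGroup_of_addCommGroup (G := G)
  have _ : CompleteSpace G := IsRightUniformAddGroup.completeSpace_of_weaklyLocallyCompactSpace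
  have hU : 𝓤 G = comap (fun p : G × G => p.2 - p.1) (𝓝 0) := uniformity_eq_comap_nhds_zero G
  have _ : (𝓤 G).IsCountablyGenerated := by rw [hU]; infer_instance
  obtain ⟨W, hW, hWcauchy⟩ := exists_hasAntitoneBasis_uniformity_cauchySeq G
  have hWmem : ∀ n, ∃ O : Set G, IsOpen O ∧ (0 : G) ∈ O ∧
      ∀ a b : G, b - a ∈ O → (a, b) ∈ W n := by
    intro n
    obtain ⟨O', hO', hO'W⟩ := mem_comap.1 (hU ▸ hW.mem n)
    obtain ⟨O, hOO', hO, hO0⟩ := mem_nhds_iff.1 hO'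
    exact ⟨O, hO, hO0, fun a b hab => hO'W (hOO' hab)⟩
  choose O hO hO0 hOW using hWmem
  refine ⟨O, hO, hO0, tendsto_smallSets_iff.2 fun V hV => ?_, fun t ht => ?_⟩
  · have hVU : (fun p : G × G => p.2 - p.1) ⁻¹' V ∈ 𝓤 G := hU ▸ preimage_mem_comap hV
    filter_upwards [hW.tendsto_smallSets.eventually (eventually_smallSets_subset.2 hVU)]
      with n hn g hg
    simpa using hn (hOW n 0 g (by simpa using hg))
  · refine cauchySeq_tendsto_of_complete (hWcauchy _ fun n => hOW n _ _ ?_)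
    simpa [Finset.sum_range_succ] using ht n

section Action

variable {G X : Type*} [AddGroup G] [AddAction G X]

theorem mem_mixEnt_vadd_iff {O : Set G} {U : Set (X × X)} {a b : X} :
    (a, b) ∈ mixEnt (· +ᵥ ·) O U ↔ ∃ t ∈ O, (-t +ᵥ a, b) ∈ U := by
  constructor
  · rintro ⟨t, ht, q, hq, rfl, rfl⟩
    exact ⟨t, ht, by simpa using hq⟩
  · rintro ⟨t, ht, h⟩
    exact ⟨t, ht, _, h, by simp, rfl⟩

theorem exists_seq_uniformity_cauchySeq_of_uniformEquicontinuous [UniformSpace X]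
    [(𝓤 X).IsCountablyGenerated] (h : UniformEquicontinuous fun t : G => (t +ᵥ · : X → X)) :
    ∃ U : ℕ → Set (X × X), (∀ n, U n ∈ 𝓤 X) ∧ Tendsto U atTop (𝓤 X).smallSets ∧
      ∀ w : ℕ → X, (∀ n, ∃ g : G, (g +ᵥ w n, g +ᵥ w (n + 1)) ∈ U n) → CauchySeq w := by
  obtain ⟨W, hW, hWcauchy⟩ := exists_hasAntitoneBasis_uniformity_cauchySeq X
  refine ⟨fun n => W n ∩ {p | ∀ t : G, (t +ᵥ p.1, t +ᵥ p.2) ∈ W n},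
    fun n => inter_mem (hW.mem n) (h _ (hW.mem n)),
    hW.tendsto_smallSets.smallSets_mono (Eventually.of_forall fun _ => Set.inter_subset_left),
    fun w hw => hWcauchy w fun n => ?_⟩
  obtain ⟨g, hg⟩ := hw n
  simpa using hg.2 (-g)

end Action

theorem mixUniformity_ball_mem_of_tendsto_vadd {G X : Type*} [AddCommGroup G]
    [TopologicalSpace G] [IsTopologicalAddGroup G] [UniformSpace X] [AddAction G X]
    (h : UniformEquicontinuous fun t : G => (t +ᵥ · : X → X))
    {F : Filter X} {O : ℕ → Set G} {U : ℕ → Set (X × X)} {x : ℕ → X}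
    (hO : Tendsto O atTop (𝓝 0).smallSets) (hU : Tendsto U atTop (𝓤 X).smallSets)
    (hxF : ∀ n, {y | (x n, y) ∈ mixEnt (· +ᵥ ·) (O n) (U n)} ∈ F)
    {p : ℕ → G} {r : G} (hp : Tendsto p atTop (𝓝 r)) {ξ : X}
    (hξ : Tendsto (fun n => p n +ᵥ x n) atTop (𝓝 ξ)) :
    ∀ V ∈ mixUniformity (G := G) (· +ᵥ ·), {y | (-r +ᵥ ξ, y) ∈ V} ∈ F := by
  rintro V ⟨U₀, hU₀, O₀, hO₀, h0O₀, hV⟩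
  obtain ⟨U₁, hU₁, hU₁U₀⟩ := comp_mem_uniformity_sets hU₀
  obtain ⟨O₁, hO₁, hO₁O₀⟩ := exists_nhds_zero_half (hO₀.mem_nhds h0O₀)
  have hpr : Tendsto (fun n => p n - r) atTop (𝓝 0) := by
    simpa using hp.sub_const r
  obtain ⟨n, hUn, hOn, hpn, hξn⟩ := ((tendsto_smallSets_iff.1 hU U₁ hU₁).and
    ((tendsto_smallSets_iff.1 hO O₁ hO₁).and ((hpr.eventually_mem hO₁).and
    (hξ.eventually (UniformSpace.ball_mem_nhds ξ (h U₁ hU₁)))))).exists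
  filter_upwards [hxF n] with y hy
  obtain ⟨t, ht, hty⟩ := mem_mixEnt_vadd_iff.1 hy
  refine hV (mem_mixEnt_vadd_iff.2 ⟨t + (p n - r), hO₁O₀ _ (hOn ht) _ hpn,
    hU₁U₀ ⟨-t +ᵥ x n, ?_, hUn hty⟩⟩)
  have hshift : ((-t - p n) +ᵥ ξ, (-t - p n) +ᵥ (p n +ᵥ x n)) ∈ U₁ := hξn (-t - p n)
  rw [vadd_vadd, sub_add_cancel] at hshift
  rwa [vadd_vadd, show -(t + (p n - r)) + -r = -t - p n by abel]

theorem stmt13_general {G X : Type*}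
    [AddCommGroup G] [TopologicalSpace G] [IsTopologicalAddGroup G]
    [LocallyCompactSpace G] [TopologicalSpace.MetrizableSpace G]
    [UniformSpace X] [CompleteSpace X]
    (α : G → X → X)
    (hzero : ∀ x, α 0 x = x)
    (hadd : ∀ s t x, α s (α t x) = α (s + t) x)
    (hinv : ∀ U ∈ 𝓤 X, ∃ U' ∈ 𝓤 X, ∀ (t : G), ∀ p : X × X, p ∈ U' →
      (α t p.1, α t p.2) ∈ U)
    -- `𝒰` has a countable basis of entourages (metrizability of `𝒰`)
    (hbasis : ∃ B : Set (Set (X × X)), B.Countable ∧ (∀ W ∈ B, W ∈ 𝓤 X) ∧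
      ∀ U ∈ 𝓤 X, ∃ W ∈ B, W ⊆ U) :
    ∀ F : Filter X, F.NeBot →
      -- `F` is Cauchy with respect to `𝒰_mix`
      (∀ V ∈ mixUniformity α, ∃ A ∈ F, A ×ˢ A ⊆ V) →
      -- `F` converges in the `𝒰_mix`-topology
      ∃ x : X, ∀ V ∈ mixUniformity α, {y : X | (x, y) ∈ V} ∈ F := by
  intro F _ hCauchy
  let _ : AddAction G X :=
    { vadd := α, zero_vadd := hzero, add_vadd := fun s t x => (hadd s t x).symm }
  have hequi : UniformEquicontinuous fun t : G => (t +ᵥ · : X → X) := fun U hU => by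
    obtain ⟨U', hU', hU'U⟩ := hinv U hU
    exact mem_of_superset hU' fun p hp t => hU'U t p hp
  have _ : (𝓤 X).IsCountablyGenerated := by
    obtain ⟨B, hBc, hBU, hB⟩ := hbasis
    exact HasCountableBasis.isCountablyGenerated
      ⟨⟨fun U => ⟨hB U, fun ⟨W, hW, hWU⟩ => mem_of_superset (hBU W hW) hWU⟩⟩, hBc⟩
  obtain ⟨O, hOopen, hO0, hOlim, hOsum⟩ := exists_seq_nhds_zero_tendsto_sum_range G
  obtain ⟨U, hU, hUlim, hUcauchy⟩ :=
    exists_seq_uniformity_cauchySeq_of_uniformEquicontinuous hequi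
  obtain ⟨x, hx⟩ := exists_seq_of_forall_exists_prod_subset fun n =>
    hCauchy _ ⟨U n, hU n, O n, hOopen n, hO0 n, subset_rfl⟩
  choose t htO htU using fun n => mem_mixEnt_vadd_iff.1 (hx n).1
  obtain ⟨r, hr⟩ := hOsum t htO
  set p := fun n => ∑ k ∈ Finset.range n, t k
  obtain ⟨ξ, hξ⟩ := cauchySeq_tendsto_of_complete <| hUcauchy (fun n => p n +ᵥ x n) fun n =>
    ⟨-p (n + 1), by simpa [p, Finset.sum_range_succ, vadd_vadd] using htU n⟩
  exact ⟨-r +ᵥ ξ,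
    mixUniformity_ball_mem_of_tendsto_vadd hequi hOlim hUlim (fun n => (hx n).2) hr hξ⟩

/-- If both `𝒰` and the topology of `G` are metrizable and `(X, 𝒰)` is
complete, then `(X, 𝒰_mix)` is complete: every filter on `X` which is Cauchy with respect to
`𝒰_mix` converges, in the topology induced by `𝒰_mix`, to some point of `X`. -/
theorem stmt13 {G X : Type*}
    [AddCommGroup G] [TopologicalSpace G] [IsTopologicalAddGroup G]
    [LocallyCompactSpace G] [T2Space G] [TopologicalSpace.MetrizableSpace G]
    [UniformSpace X] [CompleteSpace X]
    (α : G → X → X)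
    (hzero : ∀ x, α 0 x = x)
    (hadd : ∀ s t x, α s (α t x) = α (s + t) x)
    (hinv : ∀ U ∈ 𝓤 X, ∃ U' ∈ 𝓤 X, ∀ (t : G), ∀ p : X × X, p ∈ U' →
      (α t p.1, α t p.2) ∈ U)
    -- `𝒰` has a countable basis of entourages (metrizability of `𝒰`)
    (hbasis : ∃ B : Set (Set (X × X)), B.Countable ∧ (∀ W ∈ B, W ∈ 𝓤 X) ∧
      ∀ U ∈ 𝓤 X, ∃ W ∈ B, W ⊆ U) :
    ∀ F : Filter X, F.NeBot →
      -- `F` is Cauchy with respect to `𝒰_mix`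
      (∀ V ∈ mixUniformity α, ∃ A ∈ F, A ×ˢ A ⊆ V) →
      -- `F` converges in the `𝒰_mix`-topology
      ∃ x : X, ∀ V ∈ mixUniformity α, {y : X | (x, y) ∈ V} ∈ F :=
  stmt13_general α hzero hadd hinv hbasis
end

section
/- Let a locally compact abelian group G act via α on a set X carrying a G-invariant uniformity 𝒰, and let 𝒰_mix be the mixed uniformity. Then x ∈ X is Bohr-type almost periodic with respect to 𝒰 (for every U ∈ 𝒰 the set P_U(x) = {t ∈ G : (α(t,x), x) ∈ U} is relatively dense in G) if and only if x is Bohr-type almost periodic with respect to 𝒰_mix. -/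
open Uniformity Pointwise

/-! Every `U` lies in `V[O,U]` (take `t = 0`), so the forward direction is monotonicity of
relative density. Conversely, a return time `t` for `V[O,U]` satisfies `α t x = α s y` with
`s ∈ O` and `(y, x) ∈ U`, so `y = α (-s + t) x` and `t ∈ O + P_U(x)`; taking `O` inside a compact
neighbourhood `C` of `0`, the relatively dense set `C + P_U(x)` makes `P_U(x)` relatively dense. -/

def IsRelativelyDense {G : Type*} [Add G] [TopologicalSpace G] (A : Set G) : Prop :=
  ∃ K : Set G, IsCompact K ∧ A + K = Set.univ

namespace IsRelativelyDense

variable {G : Type*} [TopologicalSpace G]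

theorem mono [Add G] {A B : Set G} (hA : IsRelativelyDense A) (hAB : A ⊆ B) :
    IsRelativelyDense B := by
  obtain ⟨K, hK, hAK⟩ := hA
  exact ⟨K, hK, Set.eq_univ_of_univ_subset (hAK ▸ Set.add_subset_add_right hAB)⟩

theorem of_isCompact_add [AddCommMonoid G] [ContinuousAdd G] {A C : Set G}
    (h : IsRelativelyDense (C + A)) (hC : IsCompact C) : IsRelativelyDense A := by
  obtain ⟨K, hK, hCAK⟩ := h
  exact ⟨C + K, hC.add hK, by rwa [add_comm C A, add_assoc] at hCAK⟩

end IsRelativelyDense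

section MixedEntourage

variable {G X : Type*} [AddGroup G] {α : G → X → X} {O : Set G} {U : Set (X × X)}

theorem subset_mixEnt (hzero : ∀ x, α 0 x = x) (hO : (0 : G) ∈ O) : U ⊆ mixEnt α O U :=
  fun p hp => ⟨0, hO, p, hp, (hzero _).symm, rfl⟩

theorem exists_neg_add_of_mem_mixEnt (hzero : ∀ x, α 0 x = x)
    (hadd : ∀ s t x, α s (α t x) = α (s + t) x) {t : G} {x y : X}
    (h : (α t x, y) ∈ mixEnt α O U) : ∃ s ∈ O, (α (-s + t) x, y) ∈ U := by
  obtain ⟨s, hs, q, hq, hq₁ : α t x = α s q.1, hq₂ : y = q.2⟩ := h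
  have hq₁' : q.1 = α (-s + t) x := by
    rw [← hadd, hq₁, hadd, neg_add_cancel, hzero]
  refine ⟨s, hs, ?_⟩
  rw [← hq₁', hq₂]
  exact hq

theorem returnTimes_mixEnt_subset (hzero : ∀ x, α 0 x = x)
    (hadd : ∀ s t x, α s (α t x) = α (s + t) x) (x : X) :
    {t : G | (α t x, x) ∈ mixEnt α O U} ⊆ O + {t : G | (α t x, x) ∈ U} := by
  intro t ht
  obtain ⟨s, hs, hsU⟩ := exists_neg_add_of_mem_mixEnt hzero hadd ht
  exact ⟨s, hs, -s + t, hsU, add_neg_cancel_left s t⟩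

end MixedEntourage

theorem stmt14_general {G X : Type*}
    [AddCommGroup G] [TopologicalSpace G] [IsTopologicalAddGroup G]
    [LocallyCompactSpace G]
    [UniformSpace X]
    (α : G → X → X)
    (hzero : ∀ x, α 0 x = x)
    (hadd : ∀ s t x, α s (α t x) = α (s + t) x)
    (x : X) :
    (∀ U ∈ 𝓤 X, ∃ K : Set G, IsCompact K ∧ {t : G | (α t x, x) ∈ U} + K = Set.univ)
      ↔
    (∀ V ∈ mixUniformity α, ∃ K : Set G, IsCompact K ∧
      {t : G | (α t x, x) ∈ V} + K = Set.univ) := by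
  constructor
  · rintro h V ⟨U, hU, O, -, hO, hV⟩
    exact IsRelativelyDense.mono (h U hU) fun t ht => hV (subset_mixEnt hzero hO ht)
  · intro h U hU
    obtain ⟨C, hC, hC0⟩ := exists_compact_mem_nhds (0 : G)
    have hmix : IsRelativelyDense {t : G | (α t x, x) ∈ mixEnt α (interior C) U} :=
      h _ ⟨U, hU, _, isOpen_interior, mem_interior_iff_mem_nhds.2 hC0, subset_rfl⟩
    refine (hmix.mono ?_).of_isCompact_add hC
    exact (returnTimes_mixEnt_subset hzero hadd x).trans
      (Set.add_subset_add_right interior_subset)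

/-- Mixing the uniformity does not change Bohr-type almost periodicity:
`x` is Bohr-type almost periodic with respect to `𝒰` iff it is Bohr-type almost periodic
with respect to `𝒰_mix`. -/
theorem stmt14 {G X : Type*}
    [AddCommGroup G] [TopologicalSpace G] [IsTopologicalAddGroup G]
    [LocallyCompactSpace G] [T2Space G]
    [UniformSpace X]
    (α : G → X → X)
    (hzero : ∀ x, α 0 x = x)
    (hadd : ∀ s t x, α s (α t x) = α (s + t) x)
    (hinv : ∀ U ∈ 𝓤 X, ∃ U' ∈ 𝓤 X, ∀ (t : G), ∀ p : X × X, p ∈ U' →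
      (α t p.1, α t p.2) ∈ U)
    (x : X) :
    (∀ U ∈ 𝓤 X, ∃ K : Set G, IsCompact K ∧ {t : G | (α t x, x) ∈ U} + K = Set.univ)
      ↔
    (∀ V ∈ mixUniformity α, ∃ K : Set G, IsCompact K ∧
      {t : G | (α t x, x) ∈ V} + K = Set.univ) :=
  stmt14_general α hzero hadd x
end

section
/- Let G be a locally compact abelian group and let f: G → ℂ be a bounded uniformly continuous function. Then the following are equivalent: (i) f is Bohr almost periodic, i.e. for every ε > 0 the set {t ∈ G : sup_{x ∈ G} |f(x − t) − f(x)| < ε} is relatively dense in G; (ii) f is Bochner almost periodic, i.e. the set {T_t f : t ∈ G} of all translates of f has compact closure in the Banach space of bounded uniformly continuous functions on G with the supremum norm, where (T_t f)(x) = f(x − t). -/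
open Pointwise Set Filter Topology Uniformity UniformConvergence
open scoped translate

/-! If `P` is the set of `ε`-almost periods, then for `p ∈ P` the translate `τ (p + k) f` is
uniformly `ε`-close to `τ k f`, because `τ (p + k) f - τ k f` is a translate of `τ p f - f`. So if
`P + K = G` with `K` compact, every translate is `ε`-close to the set `τ K f`, which is compact
since `t ↦ τ t f` is continuous for uniformly continuous `f`; hence the translates are totally
bounded, and their closure in the complete space `G →ᵤ ℂ` is compact. Conversely, if `τ K f` is a
finite `ε/2`-net of the translates, then each `τ t f` is `ε/2`-close to some `τ k f` with `k ∈ K`, i.e.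
`t - k ∈ P`. -/

lemma UniformFun.hasBasis_uniformity_dist {α E : Type*} [PseudoMetricSpace E] :
    (𝓤 (α →ᵤ E)).HasBasis (fun ε : ℝ => 0 < ε)
      fun ε => UniformFun.gen α E {p | dist p.1 p.2 < ε} :=
  UniformFun.hasBasis_uniformity_of_basis α E Metric.uniformity_basis_dist

section

variable {G E : Type*} [AddCommGroup G] [PseudoMetricSpace E]

-- For `f` with unbounded differences the `⨆` is the junk value `0`.
def almostPeriods (f : G → E) (ε : ℝ) : Set G :=
  {t | ⨆ x, dist (τ t f x) (f x) < ε}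

lemma continuous_ofFun_translate [TopologicalSpace G] [IsTopologicalAddGroup G] {f : G → E}
    (hf : ∀ ε > 0, ∃ O ∈ 𝓝 (0 : G), ∀ x y, x - y ∈ O → dist (f x) (f y) < ε) :
    Continuous fun t => UniformFun.ofFun (τ t f) := by
  refine continuous_iff_continuousAt.2 fun t₀ => ?_
  rw [ContinuousAt, (UniformFun.hasBasis_nhds_of_basis G E (UniformFun.ofFun (τ t₀ f))
    Metric.uniformity_basis_dist).tendsto_right_iff]
  intro ε hε
  obtain ⟨O, hO, hOf⟩ := hf ε hε
  have hnear : {t | t - t₀ ∈ O} ∈ 𝓝 t₀ :=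
    (continuous_sub_right t₀).continuousAt.preimage_mem_nhds (by simpa using hO)
  filter_upwards [hnear] with t ht x
  exact hOf (x - t₀) (x - t) (by simpa using ht)

lemma dist_translate_add_lt {f : G → E} (hf : Bornology.IsBounded (range f)) {p : G} {ε : ℝ}
    (hp : p ∈ almostPeriods f ε) (k x : G) :
    dist (τ (p + k) f x) (τ k f x) < ε := by
  obtain ⟨C, hC⟩ := Metric.isBounded_iff.1 hf
  have hbdd : BddAbove (range fun x => dist (τ p f x) (f x)) :=
    ⟨C, by rintro _ ⟨y, rfl⟩; exact hC (mem_range_self _) (mem_range_self _)⟩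
  rw [add_comm, ← translate_translate]
  exact (le_ciSup hbdd (x - k)).trans_lt hp

lemma totallyBounded_range_ofFun_translate [TopologicalSpace G] {f : G → E}
    (hf : Bornology.IsBounded (range f)) (hcont : Continuous fun t => UniformFun.ofFun (τ t f))
    (hdense : ∀ ε > 0, ∃ K : Set G, IsCompact K ∧ almostPeriods f ε + K = univ) :
    TotallyBounded (range fun t => UniformFun.ofFun (τ t f)) := by
  refine UniformFun.hasBasis_uniformity_dist.totallyBounded_iff.2 fun ε hε => ?_
  obtain ⟨K, hK, hPK⟩ := hdense (ε / 2) (half_pos hε)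
  obtain ⟨T, hT, hKT⟩ := UniformFun.hasBasis_uniformity_dist.totallyBounded_iff.1
    (hK.image hcont).totallyBounded (ε / 2) (half_pos hε)
  refine ⟨T, hT, ?_⟩
  rintro _ ⟨t, rfl⟩
  obtain ⟨p, hp, k, hk, rfl⟩ : t ∈ almostPeriods f (ε / 2) + K := hPK ▸ mem_univ t
  obtain ⟨y, hy, hky⟩ := mem_iUnion₂.1 (hKT (mem_image_of_mem _ hk))
  refine mem_iUnion₂.2 ⟨y, hy, fun x => ?_⟩
  calc dist (τ (p + k) f x) (y x)
      ≤ dist (τ (p + k) f x) (τ k f x) + dist (τ k f x) (y x) := dist_triangle _ _ _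
    _ < ε / 2 + ε / 2 := add_lt_add (dist_translate_add_lt hf hp k x) (hky x)
    _ = ε := add_halves ε

lemma exists_finite_almostPeriods_add_eq_univ {f : G → E}
    (htb : TotallyBounded (range fun t => UniformFun.ofFun (τ t f))) {ε : ℝ} (hε : 0 < ε) :
    ∃ K : Set G, K.Finite ∧ almostPeriods f ε + K = univ := by
  obtain ⟨T, hTF, hTfin, hcover⟩ := htb.exists_subset
    (UniformFun.hasBasis_uniformity_dist.mem_of_mem (half_pos hε))
  rw [← image_univ] at hTF
  obtain ⟨K, -, hK, rfl⟩ := exists_subset_image_finite_and (p := (· = T)) |>.1 ⟨T, hTF, hTfin, rfl⟩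
  refine ⟨K, hK, eq_univ_of_forall fun t => ?_⟩
  obtain ⟨_, ⟨k, hk, rfl⟩, htk⟩ := mem_iUnion₂.1 (hcover (mem_range_self t))
  have hperiod : ⨆ x, dist (τ (t - k) f x) (f x) ≤ ε / 2 := by
    refine Real.iSup_le (fun x => ?_) (half_pos hε).le
    have h : dist (f (x + k - t)) (f (x + k - k)) < ε / 2 := htk (x + k)
    rw [add_sub_cancel_right, ← sub_sub_eq_add_sub] at h
    exact h.le
  exact ⟨t - k, hperiod.trans_lt (half_lt_self hε), k, hk, sub_add_cancel t k⟩

end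

theorem stmt16_general {G : Type*}
    [AddCommGroup G] [TopologicalSpace G] [IsTopologicalAddGroup G]
    (f : G → ℂ)
    (hbdd : ∃ C : ℝ, ∀ x : G, ‖f x‖ ≤ C)
    (huc : ∀ ε > (0 : ℝ), ∃ O : Set G, IsOpen O ∧ (0 : G) ∈ O ∧
      ∀ x y : G, x - y ∈ O → ‖f x - f y‖ < ε) :
    -- (i) Bohr almost periodicity
    (∀ ε > (0 : ℝ), ∃ K : Set G, IsCompact K ∧
      {t : G | (⨆ x : G, ‖f (x - t) - f x‖) < ε} + K = Set.univ)
      ↔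
    -- (ii) Bochner almost periodicity
    IsCompact (closure (Set.range fun t : G => UniformFun.ofFun fun x : G => f (x - t))) := by
  obtain ⟨C, hC⟩ := hbdd
  have hf : Bornology.IsBounded (range f) :=
    isBounded_iff_forall_norm_le.2 ⟨C, by rintro _ ⟨x, rfl⟩; exact hC x⟩
  have hcont : Continuous fun t => UniformFun.ofFun (τ t f) := continuous_ofFun_translate
    fun ε hε =>
      let ⟨O, hO, h0, hOf⟩ := huc ε hε
      ⟨O, hO.mem_nhds h0, by simpa only [dist_eq_norm] using hOf⟩
  simp only [← dist_eq_norm]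
  refine ⟨fun hdense => ?_, fun hcpt ε hε => ?_⟩
  · exact (totallyBounded_range_ofFun_translate hf hcont hdense).closure.isCompact_of_isClosed
      isClosed_closure
  · obtain ⟨K, hK, hPK⟩ := exists_finite_almostPeriods_add_eq_univ
      (hcpt.totallyBounded.subset subset_closure) hε
    exact ⟨K, hK.isCompact, hPK⟩

/-- For a bounded uniformly continuous function `f : G → ℂ` on a locally
compact abelian group `G`, Bohr almost periodicity (relative denseness of the sets of
`ε`-almost periods for the supremum norm) is equivalent to Bochner almost periodicity
(compactness of the closure of the set of translates of `f` in the supremum-norm topology,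
i.e. in the space of functions with the uniformity of uniform convergence). -/
theorem stmt16 {G : Type*}
    [AddCommGroup G] [TopologicalSpace G] [IsTopologicalAddGroup G]
    [LocallyCompactSpace G] [T2Space G]
    (f : G → ℂ)
    (hbdd : ∃ C : ℝ, ∀ x : G, ‖f x‖ ≤ C)
    (huc : ∀ ε > (0 : ℝ), ∃ O : Set G, IsOpen O ∧ (0 : G) ∈ O ∧
      ∀ x y : G, x - y ∈ O → ‖f x - f y‖ < ε) :
    -- (i) Bohr almost periodicity
    (∀ ε > (0 : ℝ), ∃ K : Set G, IsCompact K ∧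
      {t : G | (⨆ x : G, ‖f (x - t) - f x‖) < ε} + K = Set.univ)
      ↔
    -- (ii) Bochner almost periodicity
    IsCompact (closure (Set.range fun t : G => UniformFun.ofFun fun x : G => f (x - t))) :=
  stmt16_general f hbdd huc
end

section
/- Let G be a σ-compact, uncountable locally compact abelian group, let K ⊆ G be a compact set with nonempty interior, and let μ be a pure point Radon measure on G. If μ is pseudo Bochner-type almost periodic with respect to the norm ‖ν‖_K := sup_{t ∈ G} |ν|(t + K), i.e. for every ε > 0 the set {t ∈ G : ‖T_t μ − μ‖_K < ε} is finitely relatively dense in G, then μ = 0. -/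
/-!
Since `t + x ∈ r + K` for some `r`, the distance `‖T_t μ − μ‖_K` dominates
`|μ {x} − μ {t + x}|`, so `‖T_t μ − μ‖_K < μ {x}` forces `μ {t + x} > 0`. Hence if `μ` has an
atom `x`, translating by `x` maps the set of `ε`-almost periods with `ε < μ {x}` into the set of
atoms of `μ`, which is countable because `μ` is σ-finite. A countable set cannot be finitely
relatively dense in an uncountable group, so `μ` has no atoms, and a pure point measure without
atoms vanishes.
-/

open Pointwise MeasureTheory ENNReal

/-- For pure point measures `μ, ν`, the quantity `‖μ − ν‖_K = sup_{r ∈ G} |μ − ν|(r + K)`: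
for pure point measures the total variation of the difference is computed atomwise, and
`(a - b) + (b - a)` (truncated subtraction in `ℝ≥0∞`) is `|a - b|`. -/
noncomputable def normK {G : Type*} [AddCommGroup G] [MeasurableSpace G]
    (K : Set G) (μ ν : Measure G) : ℝ≥0∞ :=
  ⨆ r : G, ∑' x : (r +ᵥ K : Set G),
    ((μ {(x : G)} - ν {(x : G)}) + (ν {(x : G)} - μ {(x : G)}))

lemma Set.not_countable_of_add_finite_eq_univ {G : Type*} [AddCommGroup G] [Uncountable G]
    {P F : Set G} (hF : F.Finite) (hPF : P + F = Set.univ) : ¬ P.Countable := fun hP => by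
  have := hP.image2 hF.countable (· + ·)
  rw [Set.image2_add, hPF] at this
  exact Set.not_countable_univ this

lemma MeasureTheory.Measure.countable_setOf_measure_singleton_pos {α : Type*} [MeasurableSpace α]
    [MeasurableSingletonClass α] (μ : Measure α) [SFinite μ] : {x | 0 < μ {x}}.Countable := by
  simpa [Set.ofPred_eq_eq_singleton] using μ.countable_meas_level_set_pos (g := id) measurable_id

section normK

variable {G : Type*} [AddCommGroup G] [MeasurableSpace G] {K : Set G}

lemma tsub_add_tsub_le_normK (hK : K.Nonempty) (μ ν : Measure G) (x : G) :
    (μ {x} - ν {x}) + (ν {x} - μ {x}) ≤ normK K μ ν := by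
  obtain ⟨k, hk⟩ := hK
  have hx : x ∈ (x - k) +ᵥ K := ⟨k, hk, by simp⟩
  exact le_iSup_of_le (x - k) (ENNReal.le_tsum (⟨x, hx⟩ : ((x - k) +ᵥ K : Set G)))

lemma measure_singleton_add_pos_of_normK_map_lt [MeasurableAdd G] (hK : K.Nonempty)
    {μ : Measure G} {t x : G} (h : normK K (μ.map (t + ·)) μ < μ {x}) : 0 < μ {t + x} := by
  have hmap : μ.map (t + ·) {t + x} = μ {x} := by
    rw [← MeasurableEquiv.coe_addLeft, MeasurableEquiv.map_apply, MeasurableEquiv.coe_addLeft,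
      Set.preimage_add_left_singleton, neg_add_cancel_left]
  refine pos_iff_ne_zero.2 fun h0 => h.not_ge ?_
  simpa [hmap, h0] using tsub_add_tsub_le_normK hK (μ.map (t + ·)) μ (t + x)

end normK

theorem stmt18_general {G : Type*}
    [AddCommGroup G] [TopologicalSpace G] [IsTopologicalAddGroup G]
    [T2Space G] [SigmaCompactSpace G] [Uncountable G]
    [MeasurableSpace G] [BorelSpace G]
    (μ : Measure G) [μ.Regular]
    -- `μ` is pure point
    (hpp : ∀ A : Set G, MeasurableSet A → μ A = ∑' x : A, μ {(x : G)})
    (K : Set G) (hKint : (interior K).Nonempty)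
    -- `μ` is pseudo Bochner-type almost periodic for `‖·‖_K`
    (hap : ∀ ε > (0 : ℝ), ∃ F : Set G, F.Finite ∧
      {t : G | normK K (Measure.map (fun x => t + x) μ) μ < ENNReal.ofReal ε} + F
        = Set.univ) :
    μ = 0 := by
  suffices hatoms : ∀ x, μ {x} = 0 by
    ext A hA
    simp [hpp A hA, hatoms]
  intro x
  by_contra hx
  obtain ⟨ε, -, hε, hεx⟩ := ENNReal.lt_iff_exists_real_btwn.1 (pos_iff_ne_zero.2 hx)
  obtain ⟨F, hF, hcover⟩ := hap ε (ENNReal.ofReal_pos.1 hε)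
  refine Set.not_countable_of_add_finite_eq_univ hF hcover <|
    (μ.countable_setOf_measure_singleton_pos.preimage (add_left_injective x)).mono fun t ht => ?_
  exact measure_singleton_add_pos_of_normK_map_lt (hKint.mono interior_subset) (ht.trans hεx)

/-- Let `G` be a σ-compact uncountable locally compact abelian group,
`K ⊆ G` compact with nonempty interior, and `μ` a pure point Radon measure on `G`. If `μ` is
pseudo Bochner-type almost periodic with respect to `‖·‖_K` (for every `ε > 0` the set
`{t : ‖T_t μ − μ‖_K < ε}` is finitely relatively dense in `G`), then `μ = 0`. -/
theorem stmt18 {G : Type*}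
    [AddCommGroup G] [TopologicalSpace G] [IsTopologicalAddGroup G]
    [LocallyCompactSpace G] [T2Space G] [SigmaCompactSpace G] [Uncountable G]
    [MeasurableSpace G] [BorelSpace G]
    (μ : Measure G) [μ.Regular]
    -- `μ` is pure point
    (hpp : ∀ A : Set G, MeasurableSet A → μ A = ∑' x : A, μ {(x : G)})
    (K : Set G) (hK : IsCompact K) (hKint : (interior K).Nonempty)
    -- `μ` is pseudo Bochner-type almost periodic for `‖·‖_K`
    (hap : ∀ ε > (0 : ℝ), ∃ F : Set G, F.Finite ∧
      {t : G | normK K (Measure.map (fun x => t + x) μ) μ < ENNReal.ofReal ε} + F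
        = Set.univ) :
    μ = 0 :=
  stmt18_general μ hpp K hKint hap
end

section
/- Consider on ℝ the measure μ = Σ_{n=1}^∞ n · δ_{5^{n+1}ℤ + 2·5^n}, where for a locally finite set S ⊆ ℝ, δ_S = Σ_{x ∈ S} δ_x denotes the sum of unit point masses at the points of S. Then: (1) μ is Bohr-type almost periodic for the vague topology, i.e. for every finite family φ_1, …, φ_k of continuous compactly supported functions on ℝ and every ε > 0, the set {t ∈ ℝ : |(T_t μ)(φ_j) − μ(φ_j)| < ε for all 1 ≤ j ≤ k} is relatively dense in ℝ (indeed it contains 5^N + 5^{N+1}ℤ for a suitable N); (2) μ is not translation bounded, i.e. sup_{t ∈ ℝ} μ(t + [0,1]) = ∞. -/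
open Pointwise MeasureTheory ENNReal

/-- The measure `μ = Σ_{n ≥ 1} n · δ_{5^{n+1}ℤ + 2·5^n}` on `ℝ` (indexed here by `n = m + 1`
with `m : ℕ`), where `δ_S = Σ_{x ∈ S} δ_x`. -/
noncomputable def muExample : Measure ℝ :=
  Measure.sum fun m : ℕ => Measure.sum fun k : ℤ =>
    ((m + 1 : ℕ) : ℝ≥0∞) • Measure.dirac ((5 : ℝ) ^ (m + 2) * (k : ℝ) + 2 * 5 ^ (m + 1))

def pt (m : ℕ) (k : ℤ) : ℝ := (5 : ℝ) ^ (m + 2) * (k : ℝ) + 2 * 5 ^ (m + 1)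

lemma mu_apply {S : Set ℝ} (hS : MeasurableSet S) :
    muExample S = ∑' m : ℕ, ∑' k : ℤ, ((m + 1 : ℕ) : ℝ≥0∞) * S.indicator 1 (pt m k) := by
  rw [muExample, Measure.sum_apply _ hS]
  refine tsum_congr fun m => ?_
  rw [Measure.sum_apply _ hS]
  refine tsum_congr fun k => ?_
  rw [Measure.smul_apply, Measure.dirac_apply' _ hS, smul_eq_mul, pt]

lemma abs_pt_ge (m : ℕ) (k : ℤ) : (5:ℝ)^(m+1) ≤ |pt m k| := by
  have hz : (5*k+2 : ℤ) ≠ 0 := by omega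
  have h1 : (1:ℝ) ≤ |((5*k+2 : ℤ) : ℝ)| := by
    rw [← Int.cast_abs]
    exact_mod_cast Int.one_le_abs hz
  have he : pt m k = (5:ℝ)^(m+1) * ((5*k+2 : ℤ) : ℝ) := by
    simp only [pt]; push_cast; ring
  rw [he, abs_mul, abs_of_nonneg (by positivity : (0:ℝ) ≤ (5:ℝ)^(m+1))]
  nlinarith [pow_pos (by norm_num : (0:ℝ) < 5) (m+1)]

lemma restrict_map (N : ℕ) (m' : ℤ) :
    (muExample.map (· + ((5:ℝ)^N + 5^(N+1) * (m' : ℝ)))).restrict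
        (Set.Ioo (-(5:ℝ)^N) ((5:ℝ)^N))
      = muExample.restrict (Set.Ioo (-(5:ℝ)^N) ((5:ℝ)^N)) := by
  set t : ℝ := (5:ℝ)^N + 5^(N+1) * (m' : ℝ) with ht_def
  have hB : MeasurableSet (Set.Ioo (-(5:ℝ)^N) ((5:ℝ)^N)) := measurableSet_Ioo
  ext A hA
  rw [Measure.restrict_apply hA, Measure.restrict_apply hA,
    Measure.map_apply (measurable_add_const t) (hA.inter hB)]
  set S := A ∩ Set.Ioo (-(5:ℝ)^N) ((5:ℝ)^N) with hS_def
  have hS : MeasurableSet S := hA.inter hB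
  have hpre : MeasurableSet ((· + t) ⁻¹' S) := (measurable_add_const t) hS
  have hSsub : S ⊆ Set.Ioo (-(5:ℝ)^N) ((5:ℝ)^N) := Set.inter_subset_right
  rw [mu_apply hpre, mu_apply hS]
  refine tsum_congr fun m => ?_
  have key : ∀ p : ℝ, ((· + t) ⁻¹' S).indicator (1 : ℝ → ℝ≥0∞) p
      = S.indicator 1 (p + t) := fun p => rfl
  by_cases h : m + 2 ≤ N
  · set c : ℤ := 5^(N-m-2) + 5^(N-m-1) * m' with hc_def
    have ht : t = (5:ℝ)^(m+2) * (c : ℝ) := by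
      have e1 : (5:ℝ)^(m+2) * 5^(N-m-2) = 5^N := by rw [← pow_add]; congr 1; omega
      have e2 : (5:ℝ)^(m+2) * 5^(N-m-1) = 5^(N+1) := by rw [← pow_add]; congr 1; omega
      rw [hc_def]; push_cast
      rw [mul_add, e1, ← mul_assoc, e2, ht_def]
    have hc : ∀ k : ℤ, pt m k + t = pt m (k + c) := by
      intro k; rw [ht]; simp only [pt]; push_cast; ring
    calc ∑' k : ℤ, ((m+1:ℕ):ℝ≥0∞) * ((· + t) ⁻¹' S).indicator 1 (pt m k)
        = ∑' k : ℤ, ((m+1:ℕ):ℝ≥0∞) * S.indicator 1 (pt m (k + c)) := by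
          refine tsum_congr fun k => ?_; rw [key, hc]
      _ = ∑' k : ℤ, ((m+1:ℕ):ℝ≥0∞) * S.indicator 1 (pt m k) :=
          Equiv.tsum_eq (Equiv.addRight c) fun k => ((m+1:ℕ):ℝ≥0∞) * S.indicator 1 (pt m k)
  · push_neg at h
    have hN : N ≤ m + 1 := by omega
    have h5N : (0:ℝ) < (5:ℝ)^N := by positivity
    have l1 : ∀ k : ℤ, ((· + t) ⁻¹' S).indicator (1 : ℝ → ℝ≥0∞) (pt m k) = 0 := by
      intro k
      rw [key]
      refine Set.indicator_of_notMem (fun hmem => ?_) _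
      have hIoo := hSsub hmem
      have habs : |pt m k + t| < (5:ℝ)^N := abs_lt.mpr ⟨hIoo.1, hIoo.2⟩
      set z : ℤ := 5^(m+1-N)*(5*k+2) + 1 + 5*m' with hz_def
      have hzne : z ≠ 0 := by
        rcases Nat.lt_or_ge N (m+1) with hlt | hge
        · have : z = 5 * (5^(m-N)*(5*k+2) + m') + 1 := by
            rw [hz_def]
            have : (5:ℤ)^(m+1-N) = 5 * 5^(m-N) := by
              rw [← pow_succ']; congr 1; omega
            rw [this]; ring
          omega
        · have hNe : N = m + 1 := by omega
          have : z = 5 * (k + m') + 3 := by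
            rw [hz_def, hNe]; simp; ring
          omega
      have heq : pt m k + t = (5:ℝ)^N * (z : ℝ) := by
        have e : (5:ℝ)^N * 5^(m+1-N) = 5^(m+1) := by rw [← pow_add]; congr 1; omega
        rw [hz_def]; simp only [pt, ht_def]; push_cast
        linear_combination (-(5*(k:ℝ))-2) * e
      have h1 : (1:ℝ) ≤ |(z : ℝ)| := by
        rw [← Int.cast_abs]; exact_mod_cast Int.one_le_abs hzne
      rw [heq, abs_mul, abs_of_nonneg h5N.le] at habs
      nlinarith
    have l2 : ∀ k : ℤ, S.indicator (1 : ℝ → ℝ≥0∞) (pt m k) = 0 := by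
      intro k
      refine Set.indicator_of_notMem (fun hmem => ?_) _
      have hIoo := hSsub hmem
      have habs : |pt m k| < (5:ℝ)^N := abs_lt.mpr ⟨hIoo.1, hIoo.2⟩
      have := abs_pt_ge m k
      have hle : (5:ℝ)^N ≤ (5:ℝ)^(m+1) :=
        pow_le_pow_right₀ (by norm_num) hN
      linarith
    simp only [l1, l2, mul_zero, tsum_zero]

lemma mu_not_tb : (⨆ t : ℝ, muExample (Set.Icc t (t + 1))) = ⊤ := by
  by_contra h
  obtain ⟨n, hn⟩ := ENNReal.exists_nat_gt h
  have key : ∀ m : ℕ, ((m + 1 : ℕ) : ℝ≥0∞) ≤ ⨆ t : ℝ, muExample (Set.Icc t (t + 1)) := by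
    intro m
    refine le_trans ?_ (le_iSup (fun t => muExample (Set.Icc t (t + 1))) (2 * (5:ℝ)^(m+1)))
    set t := 2 * (5:ℝ)^(m+1) with ht
    have hmem : pt m 0 ∈ Set.Icc t (t + 1) := by
      simp only [pt, ht, Int.cast_zero, mul_zero, zero_add, Set.mem_Icc]
      constructor <;> linarith
    rw [mu_apply measurableSet_Icc]
    have h1 : ((m + 1 : ℕ) : ℝ≥0∞)
        ≤ ∑' k : ℤ, ((m + 1 : ℕ) : ℝ≥0∞) * (Set.Icc t (t + 1)).indicator 1 (pt m k) := by
      refine le_trans ?_ (ENNReal.le_tsum 0)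
      rw [Set.indicator_of_mem hmem]
      simp
    exact le_trans h1 (ENNReal.le_tsum m)
  have h2 := key n
  have h3 : ((n : ℕ) : ℝ≥0∞) < ((n + 1 : ℕ) : ℝ≥0∞) := by exact_mod_cast Nat.lt_succ_self n
  exact absurd (lt_of_lt_of_le h3 h2) (not_lt.mpr hn.le)


/-- The measure `μ = Σ_{n ≥ 1} n · δ_{5^{n+1}ℤ + 2·5^n}` on `ℝ` is
(1) Bohr-type almost periodic for the vague topology: for all `φ_1, …, φ_k ∈ C_c(ℝ)` and
`ε > 0`, the set of vague `ε`-almost periods contains a coset `5^N + 5^{N+1}ℤ` for suitable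
`N` and is relatively dense; and (2) not translation bounded. -/
theorem stmt19 :
    -- (1) Bohr-type almost periodicity in the vague topology
    (∀ (k : ℕ) (φ : Fin k → ℝ → ℝ),
      (∀ j, Continuous (φ j)) → (∀ j, HasCompactSupport (φ j)) →
      ∀ ε > (0 : ℝ),
        ∃ N : ℕ,
          (∀ m : ℤ, ((5 : ℝ) ^ N + 5 ^ (N + 1) * (m : ℝ)) ∈
            {t : ℝ | ∀ j, |(∫ x, φ j (x + t) ∂muExample) - ∫ x, φ j x ∂muExample| < ε}) ∧
          ∃ C : Set ℝ, IsCompact C ∧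
            {t : ℝ | ∀ j, |(∫ x, φ j (x + t) ∂muExample) - ∫ x, φ j x ∂muExample| < ε} + C
              = Set.univ)
    ∧
    -- (2) `μ` is not translation bounded
    ((⨆ t : ℝ, muExample (Set.Icc t (t + 1))) = ⊤) := by
  constructor
  · intro k φ hcont hsupp ε hε
    have hcpt : IsCompact (⋃ j, tsupport (φ j)) := isCompact_iUnion fun j => hsupp j
    obtain ⟨r, hr⟩ := hcpt.isBounded.subset_closedBall 0
    obtain ⟨N, hN⟩ := pow_unbounded_of_one_lt r (by norm_num : (1:ℝ) < 5)
    have hzero : ∀ j, ∀ x : ℝ, x ∉ Set.Ioo (-(5:ℝ)^N) ((5:ℝ)^N) → φ j x = 0 := by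
      intro j x hx
      apply image_eq_zero_of_notMem_tsupport
      intro hmem
      have hb : x ∈ Metric.closedBall (0:ℝ) r := hr (Set.mem_iUnion.mpr ⟨j, hmem⟩)
      rw [Metric.mem_closedBall, Real.dist_eq, sub_zero] at hb
      obtain ⟨hb1, hb2⟩ := abs_le.mp hb
      exact hx ⟨by linarith, by linarith⟩
    have hint : ∀ (m : ℤ) j,
        (∫ x, φ j (x + ((5:ℝ)^N + 5^(N+1) * (m : ℝ))) ∂muExample)
          = ∫ x, φ j x ∂muExample := by
      intro m j
      set t : ℝ := (5:ℝ)^N + 5^(N+1) * (m : ℝ) with ht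
      have h1 : (∫ x, φ j (x + t) ∂muExample)
          = ∫ y, φ j y ∂(muExample.map (· + t)) :=
        (integral_map (measurable_add_const t).aemeasurable
          (hcont j).aestronglyMeasurable).symm
      rw [h1,
        ← setIntegral_eq_integral_of_forall_compl_eq_zero (hzero j)
          (μ := muExample.map (· + t)),
        restrict_map N m,
        setIntegral_eq_integral_of_forall_compl_eq_zero (hzero j)]
    have hmem : ∀ m : ℤ, ((5 : ℝ) ^ N + 5 ^ (N + 1) * (m : ℝ)) ∈
        {t : ℝ | ∀ j, |(∫ x, φ j (x + t) ∂muExample) - ∫ x, φ j x ∂muExample| < ε} := by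
      intro m j
      rw [hint m j]
      simpa using hε
    refine ⟨N, hmem, Set.Icc 0 ((5:ℝ)^(N+1)), isCompact_Icc, ?_⟩
    ext x
    simp only [Set.mem_univ, iff_true]
    have hP : (0:ℝ) < (5:ℝ)^(N+1) := by positivity
    set mm : ℤ := ⌊(x - (5:ℝ)^N) / (5:ℝ)^(N+1)⌋ with hmm
    have h1 : (mm : ℝ) * (5:ℝ)^(N+1) ≤ x - (5:ℝ)^N :=
      (le_div_iff₀ hP).mp (Int.floor_le _)
    have h2 : x - (5:ℝ)^N < ((mm : ℝ) + 1) * (5:ℝ)^(N+1) :=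
      (div_lt_iff₀ hP).mp (Int.lt_floor_add_one _)
    rw [Set.mem_add]
    refine ⟨(5:ℝ)^N + 5^(N+1) * (mm : ℝ), hmem mm,
      x - ((5:ℝ)^N + 5^(N+1) * (mm : ℝ)), ?_, by ring⟩
    constructor <;> [nlinarith; nlinarith]
  · exact mu_not_tb
end
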